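/- arXiv:2108.03549 — 3 statements merged into one kernel-verified Lean document; each statement's English description precedes it below -/
import Mathlib

section
/- Let (G,rs₁,φ) be a coloring-triple with maximum degree Δ, and let S=S_φ(r,s₁:s_t:s_{Δ−2}) be a pseudo-multifan with respect to rs₁ and φ whose vertices other than r are all Δ−1 of the (Δ−1)-neighbors s₁,…,s_{Δ−2} of r, with F=F_φ(r,s₁:s_t) the maximum multifan contained in it. Then the set {s_{t+1},…,s_{Δ−2}} can be partitioned into rotations with respect to φ. -/
open SimpleGraph

variable {V : Type*}

/-- A proper edge coloring of `G` with colors in `[1, k]`. -/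
structure EdgeColoring (G : SimpleGraph V) (k : ℕ) where
  color : Sym2 V → ℕ
  mem_Icc : ∀ e ∈ G.edgeSet, color e ∈ Set.Icc 1 k
  proper : ∀ u v w : V, G.Adj u v → G.Adj u w → v ≠ w → color s(u, v) ≠ color s(u, w)

namespace EdgeColoring

/-- The set of colors of `[1, k]` missing at `v`. -/
def missing {G : SimpleGraph V} {k : ℕ} (φ : EdgeColoring G k) (v : V) : Set ℕ :=
  {c | c ∈ Set.Icc 1 k ∧ ∀ u, G.Adj v u → φ.color s(v, u) ≠ c}

end EdgeColoring

/-- A vertex set `X` is `φ`-elementary if the missing-color sets of its vertices are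
pairwise disjoint. -/
def Elementary {G : SimpleGraph V} {k : ℕ} (φ : EdgeColoring G k) (X : Set V) : Prop :=
  ∀ x ∈ X, ∀ y ∈ X, x ≠ y → φ.missing x ∩ φ.missing y = ∅

/-- The spanning subgraph consisting of the edges colored `a` or `b`; its connected
components are the `(a, b)`-chains. -/
def chainGraph {G : SimpleGraph V} {k : ℕ} (φ : EdgeColoring G k) (a b : ℕ) :
    SimpleGraph V where
  Adj u v := G.Adj u v ∧ (φ.color s(u, v) = a ∨ φ.color s(u, v) = b)
  symm := ⟨fun u v h => ⟨h.1.symm, by rw [Sym2.eq_swap]; exact h.2⟩⟩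
  loopless := ⟨fun v h => G.loopless.irrefl v h.1⟩

section
variable [Fintype V] [DecidableEq V]

/-- `G` is class 2: there is no proper edge coloring with `Δ = maxDegree` colors. -/
def Class2 (G : SimpleGraph V) [DecidableRel G.Adj] : Prop :=
  IsEmpty (EdgeColoring G G.maxDegree)

/-- `G` is a Hilton–Zhao graph: connected, class 2, and every vertex of maximum degree has
at most two neighbors of maximum degree (`Δ(G_Δ) ≤ 2`). -/
def IsHZ (G : SimpleGraph V) [DecidableRel G.Adj] : Prop :=
  G.Connected ∧ Class2 G ∧
    ∀ v, G.degree v = G.maxDegree →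
      ((G.neighborFinset v).filter fun w => G.degree w = G.maxDegree).card ≤ 2

/-- `s 1, …, s (Δ - 2)` is a labeling (without repetition) of all the `(Δ-1)`-neighbors
of `r`. -/
def NbrLabeling (G : SimpleGraph V) [DecidableRel G.Adj] (r : V) (s : ℕ → V) : Prop :=
  Set.InjOn s (Set.Icc 1 (G.maxDegree - 2)) ∧
  (∀ i ∈ Set.Icc 1 (G.maxDegree - 2), G.Adj r (s i) ∧ G.degree (s i) = G.maxDegree - 1) ∧
  ∀ w, G.Adj r w → G.degree w = G.maxDegree - 1 →
    ∃ i ∈ Set.Icc 1 (G.maxDegree - 2), w = s i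

end

/-- `(r, r(s 1), s 1, r(s 2), s 2, …, r(s p), s p)` is a multifan centered at `r` with
respect to the edge `r(s 1)` and the coloring `φ` (a coloring of `G` minus that edge). -/
def IsMultifanAt {k : ℕ} {H : SimpleGraph V} (φ : EdgeColoring H k)
    (G : SimpleGraph V) (r : V) (s : ℕ → V) (p : ℕ) : Prop :=
  1 ≤ p ∧
  (∀ i ∈ Set.Icc 1 p, G.Adj r (s i) ∧ s i ≠ r) ∧
  Set.InjOn s (Set.Icc 1 p) ∧
  ∀ i ∈ Set.Icc 2 p, ∃ j ∈ Set.Icc 1 (i - 1), φ.color s(r, s i) ∈ φ.missing (s j)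

section
variable [Fintype V] [DecidableEq V]

/-- A multifan in an HZ-graph: additionally, all vertices except the center have degree
`Δ - 1`. -/
def IsHZMultifan {k : ℕ} {H : SimpleGraph V} (φ : EdgeColoring H k)
    (G : SimpleGraph V) [DecidableRel G.Adj] (r : V) (t : ℕ → V) (p : ℕ) : Prop :=
  IsMultifanAt φ G r t p ∧ ∀ i ∈ Set.Icc 1 p, G.degree (t i) = G.maxDegree - 1

/-- The multifan on `r, s 1, …, s p` is maximum at `r`: its number of vertices is maximum
among all multifans with respect to `rs` and `φ'` over all neighbors `s` of `r` and all
colorings `φ' ∈ C^Δ(G - rs)`. -/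
def IsMaximumMultifan (G : SimpleGraph V) [DecidableRel G.Adj] (r : V) (s : ℕ → V) (p : ℕ)
    (φ : EdgeColoring (G.deleteEdges {s(r, s 1)}) G.maxDegree) : Prop :=
  IsHZMultifan φ G r s p ∧
  ∀ (t : ℕ → V) (q : ℕ) (φ' : EdgeColoring (G.deleteEdges {s(r, t 1)}) G.maxDegree),
    IsHZMultifan φ' G r t q → q ≤ p

end

/-- `φ'` is `(F, φ)`-stable for the multifan on `r, s 1, …, s p`: the missing sets at all
vertices of the fan agree, as do the colors of all (colored) edges of the fan. -/
def MultifanStable {k : ℕ} {H : SimpleGraph V} (φ φ' : EdgeColoring H k)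
    (r : V) (s : ℕ → V) (p : ℕ) : Prop :=
  φ'.missing r = φ.missing r ∧
  (∀ i ∈ Set.Icc 1 p, φ'.missing (s i) = φ.missing (s i)) ∧
  ∀ i ∈ Set.Icc 2 p, φ'.color s(r, s i) = φ.color s(r, s i)

section
variable [Fintype V] [DecidableEq V]

/-- `S_φ(r, s 1 : s t : s (Δ - 2))` is a pseudo-multifan: the initial segment up to `s t`
is a maximum multifan, and the whole vertex set is `φ'`-elementary for every
`(F, φ)`-stable coloring `φ'`. -/
def IsPseudoMultifan (G : SimpleGraph V) [DecidableRel G.Adj] (r : V) (s : ℕ → V) (t : ℕ)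
    (φ : EdgeColoring (G.deleteEdges {s(r, s 1)}) G.maxDegree) : Prop :=
  1 ≤ t ∧ t ≤ G.maxDegree - 2 ∧
  IsMaximumMultifan G r s t φ ∧
  ∀ φ' : EdgeColoring (G.deleteEdges {s(r, s 1)}) G.maxDegree,
    MultifanStable φ φ' r s t →
    Elementary φ' ({r} ∪ s '' Set.Icc 1 (G.maxDegree - 2))

/-- The list `l` of vertices forms a rotation with respect to `φ`: distinct
`(Δ-1)`-neighbors of `r`, φ-elementary, and the edge from `r` to each vertex of the list
is colored with the unique missing color of the previous vertex (cyclically). -/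
def IsRotation (G : SimpleGraph V) [DecidableRel G.Adj] {k : ℕ} {H : SimpleGraph V}
    (φ : EdgeColoring H k) (r : V) (l : List V) : Prop :=
  l ≠ [] ∧ l.Nodup ∧
  (∀ v ∈ l, G.Adj r v ∧ G.degree v = G.maxDegree - 1) ∧
  Elementary φ {v | v ∈ l} ∧
  ∀ i : Fin l.length,
    φ.missing (l.get i) =
      {φ.color s(r, l.get ⟨(↑i + 1) % l.length, Nat.mod_lt _ i.pos⟩)}

/-- A typical multifan `F_φ(r, s 1 : s α : s β)`. -/
def IsTypicalMultifan (G : SimpleGraph V) [DecidableRel G.Adj] (r : V) (s : ℕ → V)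
    (α β : ℕ) (φ : EdgeColoring (G.deleteEdges {s(r, s 1)}) G.maxDegree) : Prop :=
  1 ≤ α ∧ α ≤ β ∧ β ≤ G.maxDegree - 2 ∧
  IsMultifanAt φ G r s β ∧
  (∀ i ∈ Set.Icc 1 β, G.degree (s i) = G.maxDegree - 1) ∧
  φ.missing r = {1} ∧
  φ.missing (s 1) = {2, G.maxDegree} ∧
  (∀ i ∈ Set.Icc 2 β, i ≠ α + 1 → φ.color s(r, s i) = i ∧ φ.missing (s i) = {i + 1}) ∧
  (α < β → φ.color s(r, s (α + 1)) = G.maxDegree ∧ φ.missing (s (α + 1)) = {α + 2})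

/-- `L = (F, ru, u, ux, x)` is a lollipop centered at `r` (on top of the typical multifan
with vertices `r, s 1, …, s β`): `u` is a `Δ`-neighbor of `r` and `x` is a
`(Δ-1)`-neighbor of `u` not among `s 1, …, s β`. -/
def IsLollipop (G : SimpleGraph V) [DecidableRel G.Adj] (r : V) (s : ℕ → V) (β : ℕ)
    (u x : V) : Prop :=
  G.Adj r u ∧ G.degree u = G.maxDegree ∧
  G.Adj u x ∧ G.degree x = G.maxDegree - 1 ∧
  x ≠ r ∧ ∀ i ∈ Set.Icc 1 β, x ≠ s i

end

/-- For a typical multifan `F_φ(r, s 1 : s α : s β)` in an HZ-graph with maximum degree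
`Δ`, the `Δ`-inducing colors are `Δ` together with `α + 2, …, β + 1`. -/
def IsDeltaInducingColor (Δ α β c : ℕ) : Prop :=
  c = Δ ∨ c ∈ Set.Icc (α + 2) (β + 1)

/-- For a typical multifan `F_φ(r, s 1 : s α : s β)`, the 2-inducing colors are
`2, 3, …, α + 1`. -/
def Is2InducingColor (α c : ℕ) : Prop :=
  c ∈ Set.Icc 2 (α + 1)

/-- `φ'` is `(L, φ)`-stable for the lollipop `L = (F, ru, u, ux, x)`. -/
def LollipopStable {k : ℕ} {H : SimpleGraph V} (φ φ' : EdgeColoring H k)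
    (r : V) (s : ℕ → V) (β : ℕ) (u x : V) : Prop :=
  MultifanStable φ φ' r s β ∧
  φ'.missing u = φ.missing u ∧ φ'.missing x = φ.missing x ∧
  φ'.color s(r, u) = φ.color s(r, u) ∧ φ'.color s(u, x) = φ.color s(u, x)

/-- `φ'` is obtained from `φ` by a single Kempe change on the `(a, b)`-chain containing
the vertex `z`: colors `a` and `b` are interchanged on that chain and all other edges
keep their colors. -/
def KempeChangeAt {k : ℕ} {H : SimpleGraph V} (φ φ' : EdgeColoring H k) (a b : ℕ)
    (z : V) : Prop :=
  (∀ u v : V, H.Adj u v →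
    ((chainGraph φ a b).Reachable z u ∨ (chainGraph φ a b).Reachable z v) →
    φ'.color s(u, v) =
      if φ.color s(u, v) = a then b
      else if φ.color s(u, v) = b then a
      else φ.color s(u, v)) ∧
  (∀ u v : V, H.Adj u v →
    ¬(chainGraph φ a b).Reachable z u → ¬(chainGraph φ a b).Reachable z v →
    φ'.color s(u, v) = φ.color s(u, v))

/-- `v` is an endvertex of the `(a, b)`-chain (in the chain graph `C`) containing `z`:
it belongs to that chain and has at most one neighbor on it. -/
def IsChainEnd (C : SimpleGraph V) (z v : V) : Prop :=
  C.Reachable z v ∧ ∀ w₁ w₂ : V, C.Adj v w₁ → C.Adj v w₂ → w₁ = w₂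

/-- `l` is the index list of an `a`-inducing sequence `s_{ℓ 1}, …, s_{ℓ h}` of the
multifan on `r, s 1, …, s p`. -/
def IsInducingSeq {k : ℕ} {H : SimpleGraph V} (φ : EdgeColoring H k) (r : V) (s : ℕ → V)
    (p a : ℕ) (l : List ℕ) : Prop :=
  (∀ i ∈ l, i ∈ Set.Icc 2 p) ∧
  l.Chain' (· < ·) ∧
  (∀ h : l ≠ [], φ.color s(r, s (l.head h)) = a) ∧
  l.Chain' (fun i j => φ.color s(r, s j) ∈ φ.missing (s i))

/-- The color `c` is induced by `a` (an `a`-inducing color): either `c = a` or `c` is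
missing at a vertex of some `a`-inducing sequence. -/
def InducedBy {k : ℕ} {H : SimpleGraph V} (φ : EdgeColoring H k) (r : V) (s : ℕ → V)
    (p a c : ℕ) : Prop :=
  c = a ∨ ∃ l, IsInducingSeq φ r s p a l ∧ ∃ i ∈ l, c ∈ φ.missing (s i)

/-- The order `δ ≺ lam` on `a`-inducing colors. -/
def ColorPrec {k : ℕ} {H : SimpleGraph V} (φ : EdgeColoring H k) (r : V) (s : ℕ → V)
    (p a δ lam : ℕ) : Prop :=
  (δ = a ∧ ∃ l, IsInducingSeq φ r s p a l ∧ ∃ i ∈ l, lam ∈ φ.missing (s i)) ∨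
  ∃ l, IsInducingSeq φ r s p a l ∧ ∃ i j : Fin l.length, i < j ∧
    δ ∈ φ.missing (s (l.get i)) ∧ lam ∈ φ.missing (s (l.get j))


section Aux
variable [Fintype V]

/-- The finset of missing colors. -/
def missFinset {H : SimpleGraph V} [DecidableRel H.Adj] {k : ℕ}
    (φ : EdgeColoring H k) (v : V) : Finset ℕ :=
  Finset.Icc 1 k \ (H.neighborFinset v).image fun u => φ.color s(v, u)

lemma missing_eq_coe {H : SimpleGraph V} [DecidableRel H.Adj] {k : ℕ}
    (φ : EdgeColoring H k) (v : V) :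
    φ.missing v = ↑(missFinset φ v) := by
  ext c
  simp only [EdgeColoring.missing, Set.mem_setOf_eq, missFinset, Finset.coe_sdiff,
    Set.mem_diff, Finset.coe_Icc, Finset.mem_coe, Finset.mem_image,
    SimpleGraph.mem_neighborFinset, not_exists, not_and, Set.mem_Icc]

lemma missFinset_card {H : SimpleGraph V} [DecidableRel H.Adj] {k : ℕ}
    (φ : EdgeColoring H k) (v : V) :
    (missFinset φ v).card = k - H.degree v := by
  have hsub : ((H.neighborFinset v).image fun u => φ.color s(v, u)) ⊆ Finset.Icc 1 k := by
    intro c hc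
    simp only [Finset.mem_image, SimpleGraph.mem_neighborFinset] at hc
    obtain ⟨u, hu, rfl⟩ := hc
    have := φ.mem_Icc s(v, u) (H.mem_edgeSet.2 hu)
    simpa [Finset.mem_Icc, Set.mem_Icc] using this
  have hinj : Set.InjOn (fun u => φ.color s(v, u)) ↑(H.neighborFinset v) := by
    intro a ha b hb hab
    by_contra hne
    exact φ.proper v a b (by simpa using ha) (by simpa using hb) hne hab
  rw [missFinset, Finset.card_sdiff_of_subset hsub, Finset.card_image_of_injOn hinj,
    Nat.card_Icc, ← SimpleGraph.card_neighborFinset_eq_degree]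
  omega

end Aux

set_option maxHeartbeats 1000000 in
theorem statement_0 [Fintype V] [DecidableEq V]
    (G : SimpleGraph V) [DecidableRel G.Adj]
    (hHZ : IsHZ G) (hDelta : 3 ≤ G.maxDegree)
    (r : V) (s : ℕ → V)
    (hr : G.degree r = G.maxDegree) (hlab : NbrLabeling G r s)
    (φ : EdgeColoring (G.deleteEdges {s(r, s 1)}) G.maxDegree)
    (t : ℕ) (hS : IsPseudoMultifan G r s t φ) :
    ∃ R : List (List V),
      (∀ l ∈ R, IsRotation G φ r l) ∧
      List.Pairwise (fun l₁ l₂ => ∀ v ∈ l₁, v ∉ l₂) R ∧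
      ∀ v : V, (∃ l ∈ R, v ∈ l) ↔ ∃ j ∈ Set.Icc (t + 1) (G.maxDegree - 2), v = s j := by
  classical
  haveI : DecidableRel (G.deleteEdges {s(r, s 1)}).Adj := fun a b => Classical.dec _
  obtain ⟨ht1, ht2, hmax, hstab⟩ := hS
  obtain ⟨⟨hMF, hdegF⟩, hmaxi⟩ := hmax
  obtain ⟨-, hadjF, hinjF, hfanF⟩ := hMF
  obtain ⟨hinjS, hadjS, -⟩ := hlab
  have hElem : Elementary φ ({r} ∪ s '' Set.Icc 1 (G.maxDegree - 2)) :=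
    hstab φ ⟨rfl, fun _ _ => rfl, fun _ _ => rfl⟩
  have hadj : ∀ i ∈ Set.Icc 1 (G.maxDegree - 2), G.Adj r (s i) := fun i hi => (hadjS i hi).1
  have hdeg : ∀ i ∈ Set.Icc 1 (G.maxDegree - 2), G.degree (s i) = G.maxDegree - 1 :=
    fun i hi => (hadjS i hi).2
  have hsne_r : ∀ i ∈ Set.Icc 1 (G.maxDegree - 2), s i ≠ r := fun i hi => (hadj i hi).ne'
  have hs_ne : ∀ i ∈ Set.Icc 1 (G.maxDegree - 2), ∀ j ∈ Set.Icc 1 (G.maxDegree - 2),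
      i ≠ j → s i ≠ s j := fun i hi j hj hij he => hij (hinjS hi hj he)
  have h1mem : (1 : ℕ) ∈ Set.Icc 1 (G.maxDegree - 2) := Set.mem_Icc.2 ⟨le_refl 1, by omega⟩
  have hmm : ∀ i, 2 ≤ i → i ≤ G.maxDegree - 2 → i ∈ Set.Icc 1 (G.maxDegree - 2) :=
    fun i h1 h2 => Set.mem_Icc.2 ⟨by omega, h2⟩
  have hHadj : ∀ i, 2 ≤ i → i ≤ G.maxDegree - 2 →
      (G.deleteEdges {s(r, s 1)}).Adj r (s i) := by
    intro i h1 h2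
    rw [SimpleGraph.deleteEdges_adj]
    refine ⟨hadj i (hmm i h1 h2), ?_⟩
    simp only [Set.mem_singleton_iff, Sym2.congr_right]
    exact hs_ne i (hmm i h1 h2) 1 h1mem (by omega)
  have hadj1 : G.Adj r (s 1) := hadj 1 h1mem
  have hdegHr : (G.deleteEdges {s(r, s 1)}).degree r = G.maxDegree - 1 := by
    have h1 : (G.deleteEdges {s(r, s 1)}).neighborFinset r = (G.neighborFinset r).erase (s 1) := by
      ext u
      simp only [SimpleGraph.mem_neighborFinset, SimpleGraph.deleteEdges_adj,
        Set.mem_singleton_iff, Finset.mem_erase, Sym2.congr_right]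
      tauto
    rw [← SimpleGraph.card_neighborFinset_eq_degree, h1,
      Finset.card_erase_of_mem (by rw [SimpleGraph.mem_neighborFinset]; exact hadj1),
      SimpleGraph.card_neighborFinset_eq_degree, hr]
  have hdegHs1 : (G.deleteEdges {s(r, s 1)}).degree (s 1) = G.maxDegree - 2 := by
    have hsym : ∀ u, s(s 1, u) = s(r, s 1) ↔ u = r := by
      intro u
      rw [show s(r, s 1) = s(s 1, r) from Sym2.eq_swap, Sym2.congr_right]
    have h1 : (G.deleteEdges {s(r, s 1)}).neighborFinset (s 1)
        = (G.neighborFinset (s 1)).erase r := by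
      ext u
      simp only [SimpleGraph.mem_neighborFinset, SimpleGraph.deleteEdges_adj,
        Set.mem_singleton_iff, Finset.mem_erase, hsym u]
      tauto
    rw [← SimpleGraph.card_neighborFinset_eq_degree, h1,
      Finset.card_erase_of_mem (by rw [SimpleGraph.mem_neighborFinset]; exact hadj1.symm),
      SimpleGraph.card_neighborFinset_eq_degree, hdeg 1 h1mem]
    omega
  have hdegHsi : ∀ i, 2 ≤ i → i ≤ G.maxDegree - 2 →
      (G.deleteEdges {s(r, s 1)}).degree (s i) = G.maxDegree - 1 := by
    intro i hi1 hi2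
    have h1 : (G.deleteEdges {s(r, s 1)}).neighborFinset (s i) = G.neighborFinset (s i) := by
      ext u
      simp only [SimpleGraph.mem_neighborFinset, SimpleGraph.deleteEdges_adj,
        Set.mem_singleton_iff]
      constructor
      · exact fun h => h.1
      · intro h
        refine ⟨h, fun he => ?_⟩
        rw [Sym2.eq_iff] at he
        rcases he with ⟨ha, -⟩ | ⟨ha, -⟩
        · exact hsne_r i (hmm i hi1 hi2) ha
        · exact hs_ne i (hmm i hi1 hi2) 1 h1mem (by omega) ha
    rw [← SimpleGraph.card_neighborFinset_eq_degree, h1,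
      SimpleGraph.card_neighborFinset_eq_degree, hdeg i (hmm i hi1 hi2)]
  have hcardr : (missFinset φ r).card = 1 := by
    rw [missFinset_card, hdegHr]; omega
  have hcards1 : (missFinset φ (s 1)).card = 2 := by
    rw [missFinset_card, hdegHs1]; omega
  have hcardsi : ∀ i, 2 ≤ i → i ≤ G.maxDegree - 2 → (missFinset φ (s i)).card = 1 := by
    intro i h1 h2; rw [missFinset_card, hdegHsi i h1 h2]; omega
  -- memberships in the elementary set
  have hrX : r ∈ ({r} ∪ s '' Set.Icc 1 (G.maxDegree - 2) : Set V) := Or.inl rfl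
  have hsX : ∀ i ∈ Set.Icc 1 (G.maxDegree - 2),
      s i ∈ ({r} ∪ s '' Set.Icc 1 (G.maxDegree - 2) : Set V) := fun i hi => Or.inr ⟨i, hi, rfl⟩
  have hdisjFin : ∀ a ∈ ({r} ∪ s '' Set.Icc 1 (G.maxDegree - 2) : Set V),
      ∀ b ∈ ({r} ∪ s '' Set.Icc 1 (G.maxDegree - 2) : Set V), a ≠ b →
      Disjoint (missFinset φ a) (missFinset φ b) := by
    intro a ha b hb hne
    rw [Finset.disjoint_left]
    intro c hca hcb
    have h2 : c ∈ φ.missing a ∩ φ.missing b :=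
      ⟨by rw [missing_eq_coe]; exact hca, by rw [missing_eq_coe]; exact hcb⟩
    rw [hElem a ha b hb hne] at h2
    exact h2
  -- the union of all missing sets is [1, Δ]
  have hUeq : missFinset φ r ∪
      (Finset.Icc 1 (G.maxDegree - 2)).biUnion (fun i => missFinset φ (s i))
      = Finset.Icc 1 G.maxDegree := by
    have hpd : ∀ i ∈ Finset.Icc 1 (G.maxDegree - 2), ∀ j ∈ Finset.Icc 1 (G.maxDegree - 2),
        i ≠ j → Disjoint (missFinset φ (s i)) (missFinset φ (s j)) := by
      intro i hi j hj hij
      rw [Finset.mem_Icc] at hi hj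
      exact hdisjFin (s i) (hsX i (Set.mem_Icc.2 hi)) (s j) (hsX j (Set.mem_Icc.2 hj))
        (hs_ne i (Set.mem_Icc.2 hi) j (Set.mem_Icc.2 hj) hij)
    have hdisjU : Disjoint (missFinset φ r)
        ((Finset.Icc 1 (G.maxDegree - 2)).biUnion fun i => missFinset φ (s i)) := by
      rw [Finset.disjoint_biUnion_right]
      intro i hi
      rw [Finset.mem_Icc] at hi
      exact hdisjFin r hrX (s i) (hsX i (Set.mem_Icc.2 hi))
        (Ne.symm (hsne_r i (Set.mem_Icc.2 hi)))
    have hbicard : ((Finset.Icc 1 (G.maxDegree - 2)).biUnion fun i => missFinset φ (s i)).card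
        = G.maxDegree - 1 := by
      rw [Finset.card_biUnion hpd]
      have hsplit : Finset.Icc 1 (G.maxDegree - 2)
          = insert 1 (Finset.Icc 2 (G.maxDegree - 2)) := by
        ext x; simp only [Finset.mem_Icc, Finset.mem_insert]; omega
      rw [hsplit, Finset.sum_insert (by simp [Finset.mem_Icc]), hcards1]
      have hsc : ∑ i ∈ Finset.Icc 2 (G.maxDegree - 2), (missFinset φ (s i)).card
          = ∑ _i ∈ Finset.Icc 2 (G.maxDegree - 2), 1 :=
        Finset.sum_congr rfl (fun i hi => by
          rw [Finset.mem_Icc] at hi; exact hcardsi i hi.1 hi.2)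
      rw [hsc, Finset.sum_const, smul_eq_mul, Nat.card_Icc]
      omega
    have hsub : missFinset φ r ∪ (Finset.Icc 1 (G.maxDegree - 2)).biUnion
        (fun i => missFinset φ (s i)) ⊆ Finset.Icc 1 G.maxDegree := by
      intro c hc
      rcases Finset.mem_union.1 hc with h | h
      · simp only [missFinset, Finset.mem_sdiff] at h
        exact h.1
      · obtain ⟨i, hi, hci⟩ := Finset.mem_biUnion.1 h
        simp only [missFinset, Finset.mem_sdiff] at hci
        exact hci.1
    refine Finset.eq_of_subset_of_card_le hsub ?_
    rw [Finset.card_union_of_disjoint hdisjU, hcardr, hbicard, Nat.card_Icc]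
    omega
  -- maximality: colors on edges to outside vertices are not missing inside the fan
  have hnotF : ∀ j, t + 1 ≤ j → j ≤ G.maxDegree - 2 → ∀ i ∈ Set.Icc 1 t,
      φ.color s(r, s j) ∉ φ.missing (s i) := by
    intro j hj1 hj2 i hi hc
    rw [Set.mem_Icc] at hi
    have hjI : j ∈ Set.Icc 1 (G.maxDegree - 2) := Set.mem_Icc.2 ⟨by omega, hj2⟩
    set s' : ℕ → V := fun n => if n = t + 1 then s j else s n with hs'
    have h1 : s' 1 = s 1 := by simp only [hs']; rw [if_neg (by omega)]
    obtain ⟨φ', hcol, hmiss⟩ :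
        ∃ φ' : EdgeColoring (G.deleteEdges {s(r, s' 1)}) G.maxDegree,
          φ'.color = φ.color ∧ ∀ v, φ'.missing v = φ.missing v := by
      rw [h1]; exact ⟨φ, rfl, fun _ => rfl⟩
    have hIcc_sub : ∀ a, 1 ≤ a → a ≤ t → a ∈ Set.Icc 1 (G.maxDegree - 2) :=
      fun a ha1 ha2 => Set.mem_Icc.2 ⟨ha1, by omega⟩
    have hkey : IsHZMultifan φ' G r s' (t + 1) := by
      refine ⟨⟨by omega, ?_, ?_, ?_⟩, ?_⟩
      · intro a ha
        rw [Set.mem_Icc] at ha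
        by_cases hat : a = t + 1
        · simp only [hs']
          rw [if_pos hat]
          exact ⟨hadj j hjI, hsne_r j hjI⟩
        · simp only [hs']
          rw [if_neg hat]
          exact hadjF a (Set.mem_Icc.2 ⟨ha.1, by omega⟩)
      · intro a ha b hb hab
        rw [Set.mem_Icc] at ha hb
        simp only [hs'] at hab
        by_cases hat : a = t + 1 <;> by_cases hbt : b = t + 1
        · rw [hat, hbt]
        · rw [if_pos hat, if_neg hbt] at hab
          have := hinjS hjI (hIcc_sub b hb.1 (by omega)) hab
          omega
        · rw [if_neg hat, if_pos hbt] at hab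
          have := hinjS (hIcc_sub a ha.1 (by omega)) hjI hab
          omega
        · rw [if_neg hat, if_neg hbt] at hab
          exact hinjF (Set.mem_Icc.2 ⟨ha.1, by omega⟩) (Set.mem_Icc.2 ⟨hb.1, by omega⟩) hab
      · intro a ha
        rw [Set.mem_Icc] at ha
        by_cases hat : a = t + 1
        · refine ⟨i, Set.mem_Icc.2 ⟨hi.1, by omega⟩, ?_⟩
          rw [hcol, hmiss]
          simp only [hs']
          rw [if_pos hat, if_neg (show i ≠ t + 1 by omega)]
          exact hc
        · obtain ⟨b, hb, hbc⟩ := hfanF a (Set.mem_Icc.2 ⟨ha.1, by omega⟩)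
          rw [Set.mem_Icc] at hb
          refine ⟨b, Set.mem_Icc.2 hb, ?_⟩
          rw [hcol, hmiss]
          simp only [hs']
          rw [if_neg hat, if_neg (show b ≠ t + 1 by omega)]
          exact hbc
      · intro a ha
        rw [Set.mem_Icc] at ha
        by_cases hat : a = t + 1
        · rw [show s' a = s j by simp only [hs']; rw [if_pos hat]]
          exact hdeg j hjI
        · rw [show s' a = s a by simp only [hs']; rw [if_neg hat]]
          exact hdeg a (hIcc_sub a ha.1 (by omega))
    have := hmaxi s' (t + 1) φ' hkey
    omega
  have hcIcc : ∀ j, 2 ≤ j → j ≤ G.maxDegree - 2 →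
      φ.color s(r, s j) ∈ Finset.Icc 1 G.maxDegree := by
    intro j h1 h2
    have := φ.mem_Icc s(r, s j) ((G.deleteEdges {s(r, s 1)}).mem_edgeSet.2 (hHadj j h1 h2))
    simpa [Finset.mem_Icc, Set.mem_Icc] using this
  have hσ : ∀ j ∈ Finset.Icc (t + 1) (G.maxDegree - 2),
      ∃ i ∈ Finset.Icc (t + 1) (G.maxDegree - 2),
      i ≠ j ∧ φ.color s(r, s j) ∈ missFinset φ (s i) := by
    intro j hj
    rw [Finset.mem_Icc] at hj
    have hc' : φ.color s(r, s j) ∈ missFinset φ r ∪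
        (Finset.Icc 1 (G.maxDegree - 2)).biUnion (fun i => missFinset φ (s i)) := by
      rw [hUeq]; exact hcIcc j (by omega) hj.2
    rcases Finset.mem_union.1 hc' with h | h
    · exfalso
      have hm : φ.color s(r, s j) ∈ φ.missing r := by rw [missing_eq_coe]; exact h
      exact hm.2 (s j) (hHadj j (by omega) hj.2) rfl
    · obtain ⟨i, hi, hci⟩ := Finset.mem_biUnion.1 h
      rw [Finset.mem_Icc] at hi
      have hmiss_i : φ.color s(r, s j) ∈ φ.missing (s i) := by rw [missing_eq_coe]; exact hci
      have hit : t + 1 ≤ i := by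
        by_contra hle
        exact hnotF j hj.1 hj.2 i (Set.mem_Icc.2 ⟨hi.1, by omega⟩) hmiss_i
      have hij : i ≠ j := by
        rintro rfl
        exact hmiss_i.2 r ((hHadj i (by omega) hi.2).symm)
          (by rw [show s(s i, r) = s(r, s i) from Sym2.eq_swap])
      exact ⟨i, Finset.mem_Icc.2 ⟨hit, hi.2⟩, hij, hci⟩
  have hsingle : ∀ i ∈ Finset.Icc (t + 1) (G.maxDegree - 2), ∀ c, c ∈ missFinset φ (s i) →
      φ.missing (s i) = {c} := by
    intro i hi c hc
    rw [Finset.mem_Icc] at hi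
    obtain ⟨d, hd⟩ := Finset.card_eq_one.1 (hcardsi i (by omega) hi.2)
    rw [hd, Finset.mem_singleton] at hc
    subst hc
    rw [missing_eq_coe, hd, Finset.coe_singleton]
  -- the permutation machinery
  set I : Finset ℕ := Finset.Icc (t + 1) (G.maxDegree - 2) with hIdef
  have hIsub : ∀ x : ↥I, (↑x : ℕ) ∈ Set.Icc 1 (G.maxDegree - 2) := by
    intro x
    have h := Finset.mem_Icc.1 x.2
    exact Set.mem_Icc.2 ⟨by omega, h.2⟩
  have hI2 : ∀ x : ↥I, 2 ≤ (↑x : ℕ) ∧ (↑x : ℕ) ≤ G.maxDegree - 2 := by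
    intro x
    have h := Finset.mem_Icc.1 x.2
    exact ⟨by omega, h.2⟩
  obtain ⟨f, hfne, hfmem⟩ :
      ∃ f : ↥I → ↥I, (∀ x : ↥I, ((f x : ℕ)) ≠ ↑x) ∧
        (∀ x : ↥I, φ.color s(r, s ↑x) ∈ missFinset φ (s ↑(f x))) :=
    ⟨fun x => ⟨(hσ ↑x x.2).choose, ((hσ ↑x x.2).choose_spec).1⟩,
      fun x => ((hσ ↑x x.2).choose_spec).2.1,
      fun x => ((hσ ↑x x.2).choose_spec).2.2⟩
  have hsingle' : ∀ x : ↥I, ∀ c, c ∈ missFinset φ (s ↑x) → φ.missing (s ↑x) = {c} :=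
    fun x c hc => hsingle ↑x x.2 c hc
  have hfinj : Function.Injective f := by
    intro x y hxy
    by_contra hne
    have hsxy : s ↑x ≠ s ↑y := fun he => hne (Subtype.ext (hinjS (hIsub x) (hIsub y) he))
    have h1 := hfmem x
    have h2 := hfmem y
    rw [hxy] at h1
    have e1 := hsingle' (f y) _ h1
    have e2 := hsingle' (f y) _ h2
    have hcc : φ.color s(r, s ↑x) = φ.color s(r, s ↑y) :=
      Set.singleton_eq_singleton_iff.1 (e1.symm.trans e2)
    exact φ.proper r (s ↑x) (s ↑y) (hHadj ↑x (hI2 x).1 (hI2 x).2)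
      (hHadj ↑y (hI2 y).1 (hI2 y).2) hsxy hcc
  obtain ⟨ρ, hρinv, hρfix⟩ :
      ∃ ρ : Equiv.Perm ↥I, (∀ y, f (ρ y) = y) ∧ (∀ x, ρ x ≠ x) := by
    have hbij := Finite.injective_iff_bijective.1 hfinj
    refine ⟨(Equiv.ofBijective f hbij).symm,
      fun y => (Equiv.ofBijective f hbij).apply_symm_apply y, ?_⟩
    intro x hx
    have h1 := (Equiv.ofBijective f hbij).apply_symm_apply x
    rw [hx] at h1
    exact hfne x (congrArg Subtype.val h1)
  have hsupp : ∀ x : ↥I, x ∈ ρ.support := fun x => Equiv.Perm.mem_support.2 (hρfix x)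
  have hkey : ∀ y : ↥I, φ.missing (s ↑y) = {φ.color s(r, s ↑(ρ y))} := by
    intro y
    have h2 := hfmem (ρ y)
    rw [hρinv y] at h2
    exact hsingle' y _ h2
  have hrot : ∀ x : ↥I, IsRotation G φ r ((ρ.toList x).map fun y => s y.1) := by
    intro x
    have hnodupl : (ρ.toList x).Nodup := Equiv.Perm.nodup_toList ρ x
    have hlne : ρ.toList x ≠ [] := by
      intro h
      exact (Equiv.Perm.toList_eq_nil_iff.1 h) (hsupp x)
    have hsubX : ∀ w, w ∈ ((ρ.toList x).map fun y => s y.1) →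
        w ∈ ({r} ∪ s '' Set.Icc 1 (G.maxDegree - 2) : Set V) := by
      intro w hw
      simp only [List.mem_map] at hw
      obtain ⟨a, -, rfl⟩ := hw
      exact Or.inr ⟨↑a, hIsub a, rfl⟩
    refine ⟨fun h => hlne (List.map_eq_nil_iff.1 h), ?_, ?_, ?_, ?_⟩
    · refine List.Nodup.map_on ?_ hnodupl
      intro a _ b _ hab
      exact Subtype.ext (hinjS (hIsub a) (hIsub b) hab)
    · intro v hv
      simp only [List.mem_map] at hv
      obtain ⟨a, -, rfl⟩ := hv
      exact ⟨hadj _ (hIsub a), hdeg _ (hIsub a)⟩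
    · intro u hu v hv huv
      exact hElem u (hsubX u hu) v (hsubX v hv) huv
    · have hgen : ∀ (a b : Fin ((ρ.toList x).map fun y => s y.1).length),
          (↑b : ℕ) = (↑a + 1) % ((ρ.toList x).map fun y => s y.1).length →
          φ.missing (((ρ.toList x).map fun y => s y.1).get a)
            = {φ.color s(r, ((ρ.toList x).map fun y => s y.1).get b)} := by
        intro a b hb
        have hlen : ((ρ.toList x).map fun y => s y.1).length = (ρ.toList x).length :=
          List.length_map _
        have ha' : (↑a : ℕ) < (ρ.toList x).length := by rw [← hlen]; exact a.2
        have hb' : (↑b : ℕ) < (ρ.toList x).length := by rw [← hlen]; exact b.2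
        have hga : (((ρ.toList x).map fun y => s y.1)).get a
            = s ((ρ.toList x).get ⟨↑a, ha'⟩).1 :=
          by simp [List.get_eq_getElem]
        have hgb : (((ρ.toList x).map fun y => s y.1)).get b
            = s ((ρ.toList x).get ⟨↑b, hb'⟩).1 :=
          by simp [List.get_eq_getElem]
        have hnext : (ρ.toList x).next ((ρ.toList x).get ⟨↑a, ha'⟩) (by simp)
            = (ρ.toList x).get ⟨((↑a : ℕ) + 1) % (ρ.toList x).length,
                Nat.mod_lt _ ((Nat.zero_le _).trans_lt ha')⟩ :=
          List.next_getElem _ hnodupl _ ha'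
        have happ := Equiv.Perm.next_toList_eq_apply ρ x ((ρ.toList x).get ⟨↑a, ha'⟩)
          (List.get_mem _ _)
        have hfin : (⟨↑b, hb'⟩ : Fin (ρ.toList x).length)
            = ⟨((↑a : ℕ) + 1) % (ρ.toList x).length,
                Nat.mod_lt _ ((Nat.zero_le _).trans_lt ha')⟩ := by
          apply Fin.ext
          simpa [hlen] using hb
        have hρget : (ρ.toList x).get ⟨↑b, hb'⟩ = ρ ((ρ.toList x).get ⟨↑a, ha'⟩) := by
          rw [hfin, ← hnext]
          exact happ
        rw [hga, hgb, hρget]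
        exact hkey _
      intro i
      apply hgen
      rfl
  -- representatives of the cycles
  have hrefl : ∀ x : ↥I, x ∈ (ρ.cycleOf x).support :=
    fun x => Equiv.Perm.mem_support_cycleOf_iff.2 ⟨Equiv.Perm.SameCycle.refl ρ x, hsupp x⟩
  obtain ⟨rep, hrepSC, hrep_eq⟩ :
      ∃ rep : ↥I → ↥I, (∀ x, ρ.SameCycle x (rep x)) ∧
        (∀ x y, ρ.SameCycle x y → rep x = rep y) := by
    refine ⟨fun x => (ρ.cycleOf x).support.min' ⟨x, hrefl x⟩, ?_, ?_⟩
    · intro x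
      have h := (ρ.cycleOf x).support.min'_mem ⟨x, hrefl x⟩
      exact (Equiv.Perm.mem_support_cycleOf_iff.1 h).1
    · intro x y h
      have hco : ρ.cycleOf x = ρ.cycleOf y := h.cycleOf_eq
      simp only [hco]
  have hrep_fix : ∀ x, rep (rep x) = rep x := fun x => (hrep_eq x (rep x) (hrepSC x)).symm
  set reps : Finset ↥I := Finset.univ.image rep with hrepsdef
  have hrep_mem : ∀ z ∈ reps, rep z = z := by
    intro z hz
    rw [hrepsdef, Finset.mem_image] at hz
    obtain ⟨u, -, rfl⟩ := hz
    exact hrep_fix u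
  refine ⟨reps.toList.map (fun x => (ρ.toList x).map fun y => s y.1), ?_, ?_, ?_⟩
  · intro l hl
    simp only [List.mem_map] at hl
    obtain ⟨x, -, rfl⟩ := hl
    exact hrot x
  · have hnd : reps.toList.Pairwise (· ≠ ·) := Finset.nodup_toList reps
    rw [List.pairwise_map]
    refine List.Pairwise.imp_of_mem ?_ hnd
    intro x y hx hy hxy v hvx hvy
    simp only [List.mem_map] at hvx hvy
    obtain ⟨a, ha, rfl⟩ := hvx
    obtain ⟨b, hb, hba⟩ := hvy
    have hab : b = a := Subtype.ext (hinjS (hIsub b) (hIsub a) hba)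
    have hb' : a ∈ ρ.toList y := hab ▸ hb
    have h1 := (Equiv.Perm.mem_toList_iff.1 ha).1
    have h2 := (Equiv.Perm.mem_toList_iff.1 hb').1
    have hxy2 : ρ.SameCycle x y := h1.trans h2.symm
    refine hxy ?_
    rw [← hrep_mem x (Finset.mem_toList.1 hx), ← hrep_mem y (Finset.mem_toList.1 hy)]
    exact hrep_eq x y hxy2
  · intro v
    constructor
    · rintro ⟨l, hl, hv⟩
      simp only [List.mem_map] at hl
      obtain ⟨x, -, rfl⟩ := hl
      simp only [List.mem_map] at hv
      obtain ⟨a, -, rfl⟩ := hv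
      refine ⟨↑a, ?_, rfl⟩
      exact Set.mem_Icc.2 (Finset.mem_Icc.1 a.2)
    · rintro ⟨j, hj, rfl⟩
      rw [Set.mem_Icc] at hj
      have hjI : j ∈ I := Finset.mem_Icc.2 hj
      refine ⟨(ρ.toList (rep ⟨j, hjI⟩)).map fun y => s y.1, ?_, ?_⟩
      · simp only [List.mem_map]
        exact ⟨rep ⟨j, hjI⟩,
          Finset.mem_toList.2 (by
            rw [hrepsdef]
            exact Finset.mem_image_of_mem rep (Finset.mem_univ _)), rfl⟩
      · simp only [List.mem_map]
        exact ⟨⟨j, hjI⟩,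
          Equiv.Perm.mem_toList_iff.2 ⟨(hrepSC ⟨j, hjI⟩).symm, hsupp (rep ⟨j, hjI⟩)⟩, rfl⟩
end

section
/- Let G be a class 2 simple graph with maximum degree Δ, rs₁∈E(G), φ∈C^Δ(G−rs₁), and F_φ(r,s₁:s_p) a multifan with respect to rs₁ and φ. Let δ∈φ̄(s_i) and λ∈φ̄(s_j) for distinct i,j∈[1,p]. If δ and λ are induced by different colors from φ̄(s₁), then s_i and s_j are (δ,λ)-linked with respect to φ. -/
open SimpleGraph

variable {V : Type*}

/- ===================== Auxiliary development ===================== -/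

section SwapC

/-- Transposition of two colors. -/
def swapC (α β c : ℕ) : ℕ := if c = α then β else if c = β then α else c

lemma swapC_invol (α β c : ℕ) : swapC α β (swapC α β c) = c := by
  unfold swapC; split_ifs <;> omega

lemma swapC_inj (α β : ℕ) : Function.Injective (swapC α β) := fun x y h => by
  have h2 := congrArg (swapC α β) h
  rwa [swapC_invol, swapC_invol] at h2

lemma swapC_eq_iff {α β c d : ℕ} : swapC α β c = d ↔ c = swapC α β d :=
  ⟨fun h => by rw [← h, swapC_invol], fun h => by rw [h, swapC_invol]⟩

lemma swapC_of_ne {α β c : ℕ} (h1 : c ≠ α) (h2 : c ≠ β) : swapC α β c = c := by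
  simp [swapC, h1, h2]

lemma swapC_mem {k α β c : ℕ} (hα : α ∈ Set.Icc 1 k) (hβ : β ∈ Set.Icc 1 k)
    (hc : c ∈ Set.Icc 1 k) : swapC α β c ∈ Set.Icc 1 k := by
  unfold swapC; split_ifs <;> assumption

end SwapC

section Recolor
variable [DecidableEq V]

variable {H : SimpleGraph V} {k : ℕ} (ψ : EdgeColoring H k) {x y : V} {γ : ℕ}

/-- Recoloring a single edge `xy` with a color missing at both ends. -/
def recolorEdge (hxy : H.Adj x y) (hx : γ ∈ ψ.missing x) (hy : γ ∈ ψ.missing y) :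
    EdgeColoring H k where
  color e := if e = s(x, y) then γ else ψ.color e
  mem_Icc e he := by
    by_cases h : e = s(x, y)
    · simpa [h] using hx.1
    · simpa [h] using ψ.mem_Icc e he
  proper u v w huv huw hvw := by
    have hmain : s(u, v) ≠ s(u, w) := fun h => hvw (Sym2.congr_right.mp h)
    by_cases h1 : s(u, v) = s(x, y) <;> by_cases h2 : s(u, w) = s(x, y)
    · exact absurd (h1.trans h2.symm) hmain
    · rw [if_pos h1, if_neg h2]
      rw [Sym2.eq_iff] at h1
      rcases h1 with ⟨rfl, rfl⟩ | ⟨rfl, rfl⟩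
      · exact fun h => hx.2 w huw h.symm
      · exact fun h => hy.2 w huw h.symm
    · rw [if_neg h1, if_pos h2]
      rw [Sym2.eq_iff] at h2
      rcases h2 with ⟨rfl, rfl⟩ | ⟨rfl, rfl⟩
      · exact fun h => hx.2 v huv h
      · exact fun h => hy.2 v huv h
    · rw [if_neg h1, if_neg h2]; exact ψ.proper u v w huv huw hvw

variable (hxy : H.Adj x y) (hx : γ ∈ ψ.missing x) (hy : γ ∈ ψ.missing y)

lemma recolorEdge_color_ne {e : Sym2 V} (h : e ≠ s(x, y)) :
    (recolorEdge ψ hxy hx hy).color e = ψ.color e := if_neg h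

lemma recolorEdge_missing_other {v : V} (hvx : v ≠ x) (hvy : v ≠ y) :
    (recolorEdge ψ hxy hx hy).missing v = ψ.missing v := by
  unfold EdgeColoring.missing
  ext c
  simp only [Set.mem_setOf_eq]
  refine and_congr_right fun _ => forall_congr' fun u => imp_congr_right fun hadj => ?_
  rw [recolorEdge_color_ne]
  intro h
  rw [Sym2.eq_iff] at h
  rcases h with ⟨rfl, rfl⟩ | ⟨rfl, rfl⟩
  · exact hvx rfl
  · exact hvy rfl

lemma recolorEdge_missing_x : ψ.color s(x, y) ∈ (recolorEdge ψ hxy hx hy).missing x := by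
  refine ⟨ψ.mem_Icc _ (H.mem_edgeSet.mpr hxy), fun u hu => ?_⟩
  show (if s(x, u) = s(x, y) then γ else ψ.color s(x, u)) ≠ _
  by_cases h : s(x, u) = s(x, y)
  · rw [if_pos h]; exact fun hh => hx.2 y hxy hh.symm
  · rw [if_neg h]
    refine ψ.proper x u y hu hxy fun huy => h ?_
    rw [huy]

end Recolor

section Kempe

variable {H : SimpleGraph V} {k : ℕ} (ψ : EdgeColoring H k) (α β : ℕ) (z : V)

open Classical in
/-- The edge-color function after the Kempe swap on the `(α,β)`-chain through `z`. -/
noncomputable def kempeFun : Sym2 V → ℕ := fun e =>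
  if ∃ u v, e = s(u, v) ∧ (chainGraph ψ α β).Adj u v ∧ (chainGraph ψ α β).Reachable z u
  then swapC α β (ψ.color e) else ψ.color e

lemma kempeFun_of_ne {e : Sym2 V} (h1 : ψ.color e ≠ α) (h2 : ψ.color e ≠ β) :
    kempeFun ψ α β z e = ψ.color e := by
  unfold kempeFun
  rw [if_neg]
  rintro ⟨u, v, rfl, hadj, -⟩
  rcases hadj.2 with h | h
  · exact h1 h
  · exact h2 h

lemma kempeFun_reach {u v : V} (huv : H.Adj u v)
    (hr : (chainGraph ψ α β).Reachable z u) :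
    kempeFun ψ α β z s(u, v) = swapC α β (ψ.color s(u, v)) := by
  by_cases hc : ψ.color s(u, v) = α ∨ ψ.color s(u, v) = β
  · unfold kempeFun
    rw [if_pos ⟨u, v, rfl, ⟨huv, hc⟩, hr⟩]
  · push_neg at hc
    rw [kempeFun_of_ne ψ α β z hc.1 hc.2, swapC_of_ne hc.1 hc.2]

lemma kempeFun_not_reach {u v : V} (huv : H.Adj u v)
    (hr : ¬ (chainGraph ψ α β).Reachable z u) :
    kempeFun ψ α β z s(u, v) = ψ.color s(u, v) := by
  unfold kempeFun
  rw [if_neg]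
  rintro ⟨a, b, he, hadj, hra⟩
  rw [Sym2.eq_iff] at he
  rcases he with ⟨rfl, rfl⟩ | ⟨rfl, rfl⟩
  · exact hr hra
  · exact hr (hra.trans hadj.reachable)

variable (hα : α ∈ Set.Icc 1 k) (hβ : β ∈ Set.Icc 1 k)

/-- The Kempe swap of colors `α`, `β` on the chain through `z`. -/
noncomputable def kempeSwap : EdgeColoring H k where
  color := kempeFun ψ α β z
  mem_Icc e he := by
    unfold kempeFun
    split_ifs
    · exact swapC_mem hα hβ (ψ.mem_Icc e he)
    · exact ψ.mem_Icc e he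
  proper u v w huv huw hvw := by
    by_cases hr : (chainGraph ψ α β).Reachable z u
    · rw [kempeFun_reach ψ α β z huv hr, kempeFun_reach ψ α β z huw hr]
      exact fun h => ψ.proper u v w huv huw hvw (swapC_inj α β h)
    · rw [kempeFun_not_reach ψ α β z huv hr, kempeFun_not_reach ψ α β z huw hr]
      exact ψ.proper u v w huv huw hvw

lemma kempeSwap_color_of_ne {e : Sym2 V} (h1 : ψ.color e ≠ α) (h2 : ψ.color e ≠ β) :
    (kempeSwap ψ α β z hα hβ).color e = ψ.color e := kempeFun_of_ne ψ α β z h1 h2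

lemma kempeSwap_color_not_reach {u v : V} (huv : H.Adj u v)
    (hr : ¬ (chainGraph ψ α β).Reachable z u) :
    (kempeSwap ψ α β z hα hβ).color s(u, v) = ψ.color s(u, v) :=
  kempeFun_not_reach ψ α β z huv hr

lemma kempeSwap_missing_iff {v : V} {c : ℕ} (h1 : c ≠ α) (h2 : c ≠ β) :
    c ∈ (kempeSwap ψ α β z hα hβ).missing v ↔ c ∈ ψ.missing v := by
  unfold EdgeColoring.missing
  simp only [Set.mem_setOf_eq]
  refine and_congr_right fun _ => forall_congr' fun u => imp_congr_right fun hadj => ?_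
  show kempeFun ψ α β z s(v, u) ≠ c ↔ _
  suffices hs : (kempeFun ψ α β z s(v, u) = c ↔ ψ.color s(v, u) = c) by
    exact not_congr hs
  unfold kempeFun
  split_ifs with h
  · rw [swapC_eq_iff, swapC_of_ne h1 h2]
  · rfl

lemma kempeSwap_missing_not_reach {v : V}
    (hr : ¬ (chainGraph ψ α β).Reachable z v) :
    (kempeSwap ψ α β z hα hβ).missing v = ψ.missing v := by
  unfold EdgeColoring.missing
  ext c
  simp only [Set.mem_setOf_eq]
  refine and_congr_right fun _ => forall_congr' fun u => imp_congr_right fun hadj => ?_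
  show kempeFun ψ α β z s(v, u) ≠ c ↔ _
  rw [kempeFun_not_reach ψ α β z hadj hr]

lemma kempeSwap_missing_flip {v : V} (hr : (chainGraph ψ α β).Reachable z v)
    (hm : α ∈ ψ.missing v) (hne : α ≠ β) :
    β ∈ (kempeSwap ψ α β z hα hβ).missing v := by
  refine ⟨hβ, fun u hu => ?_⟩
  show kempeFun ψ α β z s(v, u) ≠ β
  rw [kempeFun_reach ψ α β z hu hr]
  have hca : ψ.color s(v, u) ≠ α := hm.2 u hu
  by_cases hcb : ψ.color s(v, u) = β
  · rw [hcb]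
    simp only [swapC, if_neg (Ne.symm hne), if_pos rfl]
    exact fun h => hne h
  · rw [swapC_of_ne hca hcb]; exact hcb

lemma kempeSwap_missing_flip' {v : V} (hr : (chainGraph ψ α β).Reachable z v)
    (hm : β ∈ ψ.missing v) (hne : α ≠ β) :
    α ∈ (kempeSwap ψ α β z hα hβ).missing v := by
  refine ⟨hα, fun u hu => ?_⟩
  show kempeFun ψ α β z s(v, u) ≠ α
  rw [kempeFun_reach ψ α β z hu hr]
  have hcb : ψ.color s(v, u) ≠ β := hm.2 u hu
  by_cases hca : ψ.color s(v, u) = α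
  · rw [hca]
    simp only [swapC, if_pos rfl]
    exact Ne.symm hne
  · rw [swapC_of_ne hca hcb]; exact hca

end Kempe
section ThreeEnds

open SimpleGraph.Walk

lemma getVert_inj_of_isPath {C : SimpleGraph V} {u v : V} {p : C.Walk u v} :
    p.IsPath → ∀ i j, i ≤ p.length → j ≤ p.length → p.getVert i = p.getVert j → i = j := by
  induction p with
  | nil => intro _ i j hi hj _; simp only [SimpleGraph.Walk.length_nil, Nat.le_zero] at hi hj; omega
  | @cons a b c h q ih =>
    intro hp i j hi hj heq
    rw [SimpleGraph.Walk.cons_isPath_iff] at hp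
    rw [SimpleGraph.Walk.length_cons] at hi hj
    match i, j with
    | 0, 0 => rfl
    | 0, j+1 =>
      exfalso
      apply hp.2
      rw [mem_support_iff_exists_getVert]
      refine ⟨j, ?_, by omega⟩
      rw [getVert_cons_succ] at heq
      rw [← heq, getVert_zero]
    | i+1, 0 =>
      exfalso
      apply hp.2
      rw [mem_support_iff_exists_getVert]
      refine ⟨i, ?_, by omega⟩
      rw [getVert_cons_succ] at heq
      rw [heq, getVert_zero]
    | i+1, j+1 =>
      rw [getVert_cons_succ, getVert_cons_succ] at heq
      have := ih hp.1 i j (by omega) (by omega) heq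
      omega

lemma getVert_mem_support' {C : SimpleGraph V} {u v : V} (p : C.Walk u v) {i : ℕ}
    (hi : i ≤ p.length) : p.getVert i ∈ p.support :=
  mem_support_iff_exists_getVert.mpr ⟨i, rfl, hi⟩

/-- A connected graph of maximum degree at most 2 cannot have three distinct
"end" vertices (vertices with at most one neighbor). -/
lemma three_ends_false {C : SimpleGraph V} {x y z : V}
    (h2 : ∀ v w1 w2 w3, C.Adj v w1 → C.Adj v w2 → C.Adj v w3 → w1 = w2 ∨ w1 = w3 ∨ w2 = w3)
    (hxy : x ≠ y) (hxz : x ≠ z) (hyz : y ≠ z)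
    (ex : ∀ w1 w2, C.Adj x w1 → C.Adj x w2 → w1 = w2)
    (ey : ∀ w1 w2, C.Adj y w1 → C.Adj y w2 → w1 = w2)
    (ez : ∀ w1 w2, C.Adj z w1 → C.Adj z w2 → w1 = w2)
    (Rxy : C.Reachable x y) (Rxz : C.Reachable x z) : False := by
  classical
  obtain ⟨W0⟩ := Rxy
  set W : C.Walk x y := W0.toPath.1 with hWdef
  have hW : W.IsPath := W0.toPath.2
  have hWlen : W.length ≠ 0 := fun h => hxy (eq_of_length_eq_zero h)
  have hzW : z ∉ W.support := by
    intro hz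
    rw [mem_support_iff_exists_getVert] at hz
    obtain ⟨m, hm, hmL⟩ := hz
    have hm0 : m ≠ 0 := by
      intro h; subst h; rw [getVert_zero] at hm; exact hxz hm
    have hmL' : m ≠ W.length := by
      intro h; subst h; rw [getVert_length] at hm; exact hyz hm
    have ha : C.Adj (W.getVert (m-1)) (W.getVert m) := by
      have := W.adj_getVert_succ (i := m-1) (by omega)
      rwa [Nat.sub_add_cancel (by omega)] at this
    have hb : C.Adj (W.getVert m) (W.getVert (m+1)) := W.adj_getVert_succ (by omega)
    rw [hm] at ha hb
    have heq : W.getVert (m-1) = W.getVert (m+1) := ez _ _ ha.symm hb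
    have := getVert_inj_of_isPath hW (m-1) (m+1) (by omega) (by omega) heq
    omega
  obtain ⟨Q⟩ := Rxz.symm
  have hPex : ∃ n, Q.getVert n ∈ W.support :=
    ⟨Q.length, by rw [getVert_length]; exact W.start_mem_support⟩
  have hk0 : Q.getVert (Nat.find hPex) ∈ W.support := Nat.find_spec hPex
  have hk0le : Nat.find hPex ≤ Q.length := Nat.find_min' hPex (by
    rw [getVert_length]; exact W.start_mem_support)
  have hk0pos : Nat.find hPex ≠ 0 := by
    intro h
    rw [h, getVert_zero] at hk0
    exact hzW hk0
  set k0 := Nat.find hPex with hk0def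
  have hprev : Q.getVert (k0-1) ∉ W.support := Nat.find_min hPex (by omega)
  have hadj : C.Adj (Q.getVert (k0-1)) (Q.getVert k0) := by
    have := Q.adj_getVert_succ (i := k0-1) (by omega)
    rwa [Nat.sub_add_cancel (by omega)] at this
  rw [mem_support_iff_exists_getVert] at hk0
  obtain ⟨m, hm, hmL⟩ := hk0
  by_cases hm0 : m = 0
  · subst hm0
    rw [getVert_zero] at hm
    have h1 : C.Adj x (Q.getVert (k0-1)) := by
      have h0 := hadj.symm; rw [← hm] at h0; exact h0
    have h2' : C.Adj x (W.getVert 1) := by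
      have := W.adj_getVert_succ (i := 0) (by omega)
      rwa [getVert_zero] at this
    exact hprev ((ex _ _ h1 h2') ▸ getVert_mem_support' W (by omega))
  by_cases hmL' : m = W.length
  · subst hmL'
    rw [getVert_length] at hm
    have h1 : C.Adj y (Q.getVert (k0-1)) := by
      have h0 := hadj.symm; rw [← hm] at h0; exact h0
    have h2' : C.Adj y (W.getVert (W.length - 1)) := by
      have := W.adj_getVert_succ (i := W.length - 1) (by omega)
      rw [Nat.sub_add_cancel (by omega), getVert_length] at this
      exact this.symm
    exact hprev ((ey _ _ h1 h2') ▸ getVert_mem_support' W (by omega))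
  · have ha : C.Adj (W.getVert m) (W.getVert (m-1)) := by
      have := W.adj_getVert_succ (i := m-1) (by omega)
      rw [Nat.sub_add_cancel (by omega)] at this
      exact this.symm
    have hb : C.Adj (W.getVert m) (W.getVert (m+1)) := W.adj_getVert_succ (by omega)
    have hc : C.Adj (W.getVert m) (Q.getVert (k0-1)) := by rw [hm]; exact hadj.symm
    rcases h2 _ _ _ _ ha hb hc with h | h | h
    · have := getVert_inj_of_isPath hW (m-1) (m+1) (by omega) (by omega) h
      omega
    · exact hprev (h ▸ getVert_mem_support' W (by omega))
    · exact hprev (h ▸ getVert_mem_support' W (by omega))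

end ThreeEnds
section Main

variable [Fintype V] [DecidableEq V]
variable {G : SimpleGraph V} [DecidableRel G.Adj]
variable {r w : V}

lemma H_adj_iff {u v : V} :
    (G.deleteEdges {s(r, w)}).Adj u v ↔ G.Adj u v ∧ s(u, v) ≠ s(r, w) := by
  rw [SimpleGraph.deleteEdges_adj]
  simp

/-- If some color is missing at both `r` and `w` we can color the edge `rw`,
contradicting `G` being class 2. -/
lemma no_common_missing_rs1 (hC : Class2 G) (ψ : EdgeColoring (G.deleteEdges {s(r, w)}) G.maxDegree)
    {γ : ℕ} (hmr : γ ∈ ψ.missing r) (hmw : γ ∈ ψ.missing w) : False := by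
  refine hC.false ⟨fun e => if e = s(r, w) then γ else ψ.color e, ?_, ?_⟩
  · intro e he
    by_cases h : e = s(r, w)
    · simpa [h] using hmr.1
    · rw [if_neg h]
      refine ψ.mem_Icc e ?_
      induction e with
      | h u v =>
        rw [SimpleGraph.mem_edgeSet] at he ⊢
        exact (H_adj_iff).mpr ⟨he, h⟩
  · intro u v v' huv huv' hvv'
    have hmain : s(u, v) ≠ s(u, v') := fun h => hvv' (Sym2.congr_right.mp h)
    by_cases h1 : s(u, v) = s(r, w) <;> by_cases h2 : s(u, v') = s(r, w)
    · exact absurd (h1.trans h2.symm) hmain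
    · rw [if_pos h1, if_neg h2]
      have hH : (G.deleteEdges {s(r, w)}).Adj u v' := (H_adj_iff).mpr ⟨huv', h2⟩
      rw [Sym2.eq_iff] at h1
      rcases h1 with ⟨rfl, rfl⟩ | ⟨rfl, rfl⟩
      · exact fun h => hmr.2 v' hH h.symm
      · exact fun h => hmw.2 v' hH h.symm
    · rw [if_neg h1, if_pos h2]
      have hH : (G.deleteEdges {s(r, w)}).Adj u v := (H_adj_iff).mpr ⟨huv, h1⟩
      rw [Sym2.eq_iff] at h2
      rcases h2 with ⟨rfl, rfl⟩ | ⟨rfl, rfl⟩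
      · exact fun h => hmr.2 v hH h
      · exact fun h => hmw.2 v hH h
    · rw [if_neg h1, if_neg h2]
      exact ψ.proper u v v' ((H_adj_iff).mpr ⟨huv, h1⟩) ((H_adj_iff).mpr ⟨huv', h2⟩) hvv'

/-- Some color is missing at `r` in `G - rw`. -/
lemma exists_missing_r (hadj : G.Adj r w) (ψ : EdgeColoring (G.deleteEdges {s(r, w)}) G.maxDegree) :
    ∃ β, β ∈ ψ.missing r := by
  classical
  have hΔ1 : 1 ≤ G.maxDegree := by
    have h1 : 0 < G.degree r := by
      rw [SimpleGraph.degree_pos_iff_exists_adj]; exact ⟨w, hadj⟩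
    exact le_trans h1 (G.degree_le_maxDegree r)
  set P : Finset ℕ := (Finset.univ.filter fun u => (G.deleteEdges {s(r, w)}).Adj r u).image
      (fun u => ψ.color s(r, u)) with hP
  have hsub : (Finset.univ.filter fun u => (G.deleteEdges {s(r, w)}).Adj r u) ⊆
      (G.neighborFinset r).erase w := by
    intro u hu
    rw [Finset.mem_filter] at hu
    have h := (H_adj_iff).mp hu.2
    refine Finset.mem_erase.mpr ⟨fun h' => ?_, ?_⟩
    · subst h'; exact h.2 rfl
    · rw [SimpleGraph.mem_neighborFinset]; exact h.1
  have hcard : P.card < G.maxDegree := by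
    have e1 : P.card ≤ _ := Finset.card_image_le
    have e2 := Finset.card_le_card hsub
    have e3 : ((G.neighborFinset r).erase w).card = G.degree r - 1 := by
      rw [Finset.card_erase_of_mem (by rwa [SimpleGraph.mem_neighborFinset])]
      rfl
    have e4 : G.degree r ≤ G.maxDegree := G.degree_le_maxDegree r
    have e5 : 1 ≤ G.degree r := by
      rw [← SimpleGraph.card_neighborFinset_eq_degree]
      exact Finset.card_pos.mpr ⟨w, by rwa [SimpleGraph.mem_neighborFinset]⟩
    omega
  have hns : ¬ (Finset.Icc 1 G.maxDegree ⊆ P) := by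
    intro h
    have := Finset.card_le_card h
    rw [Nat.card_Icc] at this
    omega
  obtain ⟨c, hc1, hc2⟩ := Finset.not_subset.mp hns
  rw [Finset.mem_Icc] at hc1
  refine ⟨c, ⟨hc1.1, hc1.2⟩, fun u hu h => ?_⟩
  exact hc2 (Finset.mem_image.mpr ⟨u, Finset.mem_filter.mpr ⟨Finset.mem_univ u, hu⟩, h⟩)

lemma fan_prefix {ψ : EdgeColoring (G.deleteEdges {s(r, w)}) G.maxDegree} {t : ℕ → V}
    {q m : ℕ} (hfan : IsMultifanAt ψ G r t q) (h1 : 1 ≤ m) (h2 : m ≤ q) :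
    IsMultifanAt ψ G r t m :=
  ⟨h1, fun i hi => hfan.2.1 i ⟨hi.1, le_trans hi.2 h2⟩,
   hfan.2.2.1.mono (Set.Icc_subset_Icc_right h2),
   fun i hi => hfan.2.2.2 i ⟨hi.1, le_trans hi.2 h2⟩⟩

lemma fan_edge_H {ψ : EdgeColoring (G.deleteEdges {s(r, w)}) G.maxDegree} {t : ℕ → V}
    {q : ℕ} (hadj : G.Adj r w) (hfan : IsMultifanAt ψ G r t q) (h1 : t 1 = w) {n : ℕ} (hn2 : 2 ≤ n)
    (hnq : n ≤ q) : (G.deleteEdges {s(r, w)}).Adj r (t n) := by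
  refine (H_adj_iff).mpr ⟨(hfan.2.1 n ⟨by omega, hnq⟩).1, fun h => ?_⟩
  rw [Sym2.eq_iff] at h
  rcases h with ⟨-, h⟩ | ⟨h, -⟩
  · have h1q : (1:ℕ) ∈ Set.Icc 1 q := ⟨le_refl 1, by omega⟩
    have := hfan.2.2.1 (⟨by omega, hnq⟩ : n ∈ Set.Icc 1 q) h1q (h.trans h1.symm)
    omega
  · exact hadj.ne h

/-- `r`-elementarity: no color is missing at both `r` and a vertex of a multifan. -/
lemma lemR (hC : Class2 G) (hadj : G.Adj r w) : ∀ m (ψ : EdgeColoring (G.deleteEdges {s(r, w)}) G.maxDegree)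
    (t : ℕ → V) (q : ℕ), IsMultifanAt ψ G r t q → t 1 = w → m ∈ Set.Icc 1 q →
    ∀ γ, γ ∈ ψ.missing r → γ ∈ ψ.missing (t m) → False := by
  intro m
  induction m using Nat.strong_induction_on with
  | _ m IH =>
  intro ψ t q hfan h1 hm γ hγr hγm
  by_cases hm1 : m = 1
  · subst hm1; rw [h1] at hγm
    exact no_common_missing_rs1 hC ψ hγr hγm
  · have hm2 : 2 ≤ m := by
      have := hm.1; omega
    obtain ⟨h, hh, hcol⟩ := hfan.2.2.2 m ⟨hm2, hm.2⟩
    have hh1 : 1 ≤ h := hh.1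
    have hhm : h ≤ m - 1 := hh.2
    have hmq : m ≤ q := hm.2
    have hHrm : (G.deleteEdges {s(r, w)}).Adj r (t m) := fan_edge_H hadj hfan h1 hm2 hm.2
    set ψ' := recolorEdge ψ hHrm hγr hγm with hψ'
    have hth_r : t h ≠ r := (hfan.2.1 h ⟨hh1, by omega⟩).2
    have hth_tm : t h ≠ t m := by
      intro he
      have := hfan.2.2.1 (⟨hh1, by omega⟩ : h ∈ Set.Icc 1 q) hm he
      omega
    have hc_r : ψ.color s(r, t m) ∈ ψ'.missing r :=
      recolorEdge_missing_x ψ hHrm hγr hγm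
    have hc_th : ψ.color s(r, t m) ∈ ψ'.missing (t h) := by
      rw [hψ', recolorEdge_missing_other ψ hHrm hγr hγm hth_r hth_tm]
      exact hcol
    have hfan' : IsMultifanAt ψ' G r t h := by
      refine ⟨hh1, fun i hi => hfan.2.1 i ⟨hi.1, le_trans hi.2 (show h ≤ q by omega)⟩,
        hfan.2.2.1.mono (Set.Icc_subset_Icc_right (show h ≤ q by omega)), fun i hi => ?_⟩
      have hi1 : 2 ≤ i := hi.1
      have hi2 : i ≤ h := hi.2
      obtain ⟨j, hj, hcj⟩ := hfan.2.2.2 i ⟨hi1, by omega⟩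
      have hj1 : 1 ≤ j := hj.1
      have hj2 : j ≤ i - 1 := hj.2
      refine ⟨j, hj, ?_⟩
      have hcolor_eq : ψ'.color s(r, t i) = ψ.color s(r, t i) := by
        apply recolorEdge_color_ne
        intro he
        rw [Sym2.eq_iff] at he
        rcases he with ⟨-, he⟩ | ⟨he, -⟩
        · have := hfan.2.2.1 (⟨by omega, by omega⟩ : i ∈ Set.Icc 1 q) hm he
          omega
        · exact (hfan.2.1 m ⟨by omega, hm.2⟩).2 he.symm
      rw [hcolor_eq, hψ', recolorEdge_missing_other ψ hHrm hγr hγm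
        ((hfan.2.1 j ⟨hj1, by omega⟩).2) (fun he => by
          have := hfan.2.2.1 (⟨hj1, by omega⟩ : j ∈ Set.Icc 1 q) hm he
          omega)]
      exact hcj
    exact IH h (by omega) ψ' t h hfan' h1 ⟨hh1, le_refl h⟩ (ψ.color s(r, t m)) hc_r hc_th

end Main
section MainA

variable [Fintype V] [DecidableEq V]
variable {G : SimpleGraph V} [DecidableRel G.Adj]
variable {r w : V}

/-- Elementarity of multifans: no color is missing at two distinct vertices. -/
lemma lemA (hC : Class2 G) (hadj : G.Adj r w)
    (ψ : EdgeColoring (G.deleteEdges {s(r, w)}) G.maxDegree)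
    (t : ℕ → V) (q : ℕ) (hfan : IsMultifanAt ψ G r t q) (h1 : t 1 = w) :
    ∀ u v' γ, u ∈ Set.Icc 1 q → v' ∈ Set.Icc 1 q → u < v' →
      γ ∈ ψ.missing (t u) → γ ∈ ψ.missing (t v') → False := by
  intro u
  induction u using Nat.strong_induction_on with
  | _ u IHu =>
  intro v'
  induction v' using Nat.strong_induction_on with
  | _ v' IHv =>
  intro γ hu hv huv hmu hmv
  have hu1 : 1 ≤ u := hu.1
  have huq : u ≤ q := hu.2
  have hv1 : 1 ≤ v' := hv.1
  have hvq : v' ≤ q := hv.2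
  have htu_r : t u ≠ r := (hfan.2.1 u hu).2
  have htv_r : t v' ≠ r := (hfan.2.1 v' hv).2
  have htuv : t u ≠ t v' := fun he => by
    have := hfan.2.2.1 hu hv he; omega
  obtain ⟨β, hβ⟩ := exists_missing_r hadj ψ
  have hγβ : γ ≠ β := fun he => lemR hC hadj u ψ t q hfan h1 hu γ (he ▸ hβ) hmu
  have hγIcc : γ ∈ Set.Icc 1 G.maxDegree := hmu.1
  have hβIcc : β ∈ Set.Icc 1 G.maxDegree := hβ.1
  -- end-vertex properties in the chain graph
  have endg : ∀ v0 : V, γ ∈ ψ.missing v0 →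
      ∀ a b, (chainGraph ψ γ β).Adj v0 a → (chainGraph ψ γ β).Adj v0 b → a = b := by
    intro v0 hv0 a b ha hb
    by_contra hne
    have hca : ψ.color s(v0, a) = β := by
      rcases ha.2 with h | h
      · exact absurd h (hv0.2 a ha.1)
      · exact h
    have hcb : ψ.color s(v0, b) = β := by
      rcases hb.2 with h | h
      · exact absurd h (hv0.2 b hb.1)
      · exact h
    exact ψ.proper v0 a b ha.1 hb.1 hne (hca.trans hcb.symm)
  have endgβ : ∀ v0 : V, β ∈ ψ.missing v0 →
      ∀ a b, (chainGraph ψ γ β).Adj v0 a → (chainGraph ψ γ β).Adj v0 b → a = b := by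
    intro v0 hv0 a b ha hb
    by_contra hne
    have hca : ψ.color s(v0, a) = γ := by
      rcases ha.2 with h | h
      · exact h
      · exact absurd h (hv0.2 a ha.1)
    have hcb : ψ.color s(v0, b) = γ := by
      rcases hb.2 with h | h
      · exact h
      · exact absurd h (hv0.2 b hb.1)
    exact ψ.proper v0 a b ha.1 hb.1 hne (hca.trans hcb.symm)
  have h2deg : ∀ v0 w1 w2 w3 : V, (chainGraph ψ γ β).Adj v0 w1 →
      (chainGraph ψ γ β).Adj v0 w2 → (chainGraph ψ γ β).Adj v0 w3 →
      w1 = w2 ∨ w1 = w3 ∨ w2 = w3 := by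
    intro v0 w1 w2 w3 ha hb hc
    by_contra hcon
    push_neg at hcon
    obtain ⟨h12, h13, h23⟩ := hcon
    have c12 := ψ.proper v0 w1 w2 ha.1 hb.1 h12
    have c13 := ψ.proper v0 w1 w3 ha.1 hc.1 h13
    have c23 := ψ.proper v0 w2 w3 hb.1 hc.1 h23
    rcases ha.2 with h | h <;> rcases hb.2 with h' | h' <;> rcases hc.2 with h'' | h'' <;>
      omega
  by_cases hru : (chainGraph ψ γ β).Reachable r (t u)
  · by_cases hrv : (chainGraph ψ γ β).Reachable r (t v')
    · -- all three ends in one component: impossible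
      exact three_ends_false h2deg (fun h => htu_r h.symm) (fun h => htv_r h.symm)
        htuv (endgβ r hβ) (endg (t u) hmu) (endg (t v') hmv) hru hrv
    · -- swap the chain through t v' (not containing r)
      have hnrv : ¬ (chainGraph ψ γ β).Reachable (t v') r := fun h => hrv h.symm
      have hβ'v : β ∈ (kempeSwap ψ γ β (t v') hγIcc hβIcc).missing (t v') :=
        kempeSwap_missing_flip ψ γ β (t v') hγIcc hβIcc (SimpleGraph.Reachable.refl _)
          hmv hγβ
      have hβ'r : β ∈ (kempeSwap ψ γ β (t v') hγIcc hβIcc).missing r := by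
        rw [kempeSwap_missing_not_reach ψ γ β (t v') hγIcc hβIcc hnrv]
        exact hβ
      have hnrvu : ¬ (chainGraph ψ γ β).Reachable (t v') (t u) := fun h =>
        hrv (hru.trans h.symm)
      have hfan' : IsMultifanAt (kempeSwap ψ γ β (t v') hγIcc hβIcc) G r t v' := by
        refine ⟨hv1, fun i hi => hfan.2.1 i ⟨hi.1, le_trans hi.2 hvq⟩,
          hfan.2.2.1.mono (Set.Icc_subset_Icc_right hvq), fun i hi => ?_⟩
        have hi1 : 2 ≤ i := hi.1
        have hi2 : i ≤ v' := hi.2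
        obtain ⟨j, hj, hcj⟩ := hfan.2.2.2 i ⟨hi1, by omega⟩
        have hj1 : 1 ≤ j := hj.1
        have hj2 : j ≤ i - 1 := hj.2
        have hHri : (G.deleteEdges {s(r, w)}).Adj r (t i) :=
          fan_edge_H hadj hfan h1 hi1 (by omega)
        have hcol_eq : (kempeSwap ψ γ β (t v') hγIcc hβIcc).color s(r, t i)
            = ψ.color s(r, t i) :=
          kempeSwap_color_not_reach ψ γ β (t v') hγIcc hβIcc hHri hnrv
        refine ⟨j, hj, ?_⟩
        rw [hcol_eq]
        have hcβ : ψ.color s(r, t i) ≠ β := fun he => hβ.2 (t i) hHri he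
        by_cases hcγ : ψ.color s(r, t i) = γ
        · -- the anchor must be t u (or contradiction with IH)
          rcases lt_trichotomy j u with hju | hju | hju
          · exact (IHu j (by omega) u γ ⟨hj1, by omega⟩ hu hju (hcγ ▸ hcj) hmu).elim
          · subst hju
            rw [kempeSwap_missing_not_reach ψ γ β (t v') hγIcc hβIcc hnrvu]
            exact hcj
          · exact (IHv j (by omega) γ hu ⟨by omega, by omega⟩ hju hmu (hcγ ▸ hcj)).elim
        · rw [kempeSwap_missing_iff ψ γ β (t v') hγIcc hβIcc hcγ hcβ]
          exact hcj
      exact lemR hC hadj v' (kempeSwap ψ γ β (t v') hγIcc hβIcc) t v' hfan' h1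
        ⟨hv1, le_refl v'⟩ β hβ'r hβ'v
  · -- swap the chain through t u (not containing r)
    have hnru : ¬ (chainGraph ψ γ β).Reachable (t u) r := fun h => hru h.symm
    have hβ'u : β ∈ (kempeSwap ψ γ β (t u) hγIcc hβIcc).missing (t u) :=
      kempeSwap_missing_flip ψ γ β (t u) hγIcc hβIcc (SimpleGraph.Reachable.refl _) hmu hγβ
    have hβ'r : β ∈ (kempeSwap ψ γ β (t u) hγIcc hβIcc).missing r := by
      rw [kempeSwap_missing_not_reach ψ γ β (t u) hγIcc hβIcc hnru]
      exact hβ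
    have hfan' : IsMultifanAt (kempeSwap ψ γ β (t u) hγIcc hβIcc) G r t u := by
      refine ⟨hu1, fun i hi => hfan.2.1 i ⟨hi.1, le_trans hi.2 huq⟩,
        hfan.2.2.1.mono (Set.Icc_subset_Icc_right huq), fun i hi => ?_⟩
      have hi1 : 2 ≤ i := hi.1
      have hi2 : i ≤ u := hi.2
      obtain ⟨j, hj, hcj⟩ := hfan.2.2.2 i ⟨hi1, by omega⟩
      have hj1 : 1 ≤ j := hj.1
      have hj2 : j ≤ i - 1 := hj.2
      have hHri : (G.deleteEdges {s(r, w)}).Adj r (t i) :=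
        fan_edge_H hadj hfan h1 hi1 (by omega)
      have hcol_eq : (kempeSwap ψ γ β (t u) hγIcc hβIcc).color s(r, t i)
          = ψ.color s(r, t i) :=
        kempeSwap_color_not_reach ψ γ β (t u) hγIcc hβIcc hHri hnru
      refine ⟨j, hj, ?_⟩
      rw [hcol_eq]
      have hcβ : ψ.color s(r, t i) ≠ β := fun he => hβ.2 (t i) hHri he
      have hcγ : ψ.color s(r, t i) ≠ γ := by
        intro he
        exact IHu j (by omega) u γ ⟨hj1, by omega⟩ hu (by omega) (he ▸ hcj) hmu
      rw [kempeSwap_missing_iff ψ γ β (t u) hγIcc hβIcc hcγ hcβ]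
      exact hcj
    exact lemR hC hadj u (kempeSwap ψ γ β (t u) hγIcc hβIcc) t u hfan' h1
      ⟨hu1, le_refl u⟩ β hβ'r hβ'u

/-- Symmetric version of `lemA`. -/
lemma lemA' (hC : Class2 G) (hadj : G.Adj r w)
    (ψ : EdgeColoring (G.deleteEdges {s(r, w)}) G.maxDegree)
    (t : ℕ → V) (q : ℕ) (hfan : IsMultifanAt ψ G r t q) (h1 : t 1 = w)
    {u v' γ : ℕ} (hu : u ∈ Set.Icc 1 q) (hv : v' ∈ Set.Icc 1 q) (huv : u ≠ v')
    (hmu : γ ∈ ψ.missing (t u)) (hmv : γ ∈ ψ.missing (t v')) : False := by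
  rcases lt_or_gt_of_ne huv with h | h
  · exact lemA hC hadj ψ t q hfan h1 u v' γ hu hv h hmu hmv
  · exact lemA hC hadj ψ t q hfan h1 v' u γ hv hu h hmv hmu

end MainA
section Lists

lemma mem_of_getLast?' {l : List ℕ} {g : ℕ} (h : l.getLast? = some g) : g ∈ l :=
  List.mem_of_mem_getLast? (by rw [h]; exact rfl)

lemma inducing_mem_cases {H : SimpleGraph V} {k : ℕ} {φ : EdgeColoring H k} {r : V}
    {s : ℕ → V} {p a : ℕ} {l : List ℕ} (hl : IsInducingSeq φ r s p a l) {m : ℕ}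
    (hm : m ∈ l) :
    φ.color s(r, s m) = a ∨ ∃ y ∈ l, y < m ∧ φ.color s(r, s m) ∈ φ.missing (s y) := by
  obtain ⟨⟨nv, hn⟩, hget⟩ := List.mem_iff_get.mp hm
  cases nv with
  | zero =>
    left
    have hne : l ≠ [] := List.ne_nil_of_length_pos (by omega)
    have hh := hl.2.2.1 hne
    have hhead : l.head hne = m := by
      rw [List.head_eq_getElem]
      exact hget
    rwa [hhead] at hh
  | succ kk =>
    right
    refine ⟨l.get ⟨kk, by omega⟩, List.get_mem l ⟨kk, by omega⟩, ?_, ?_⟩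
    · have h2 := List.isChain_iff_getElem.mp hl.2.1 kk (by omega)
      have : l[kk + 1] = m := hget
      rwa [this] at h2
    · have h2 := List.isChain_iff_getElem.mp hl.2.2.2 kk (by omega)
      have : l[kk + 1] = m := hget
      rwa [this] at h2

lemma chain_lt_le_getLast {l : List ℕ} (hs : l.Chain' (· < ·)) {m g : ℕ} (hm : m ∈ l)
    (hg : l.getLast? = some g) : m ≤ g := by
  obtain ⟨⟨nv, hn⟩, hget⟩ := List.mem_iff_get.mp hm
  have hlen : l ≠ [] := List.ne_nil_of_mem hm
  have hp : l.Pairwise (· < ·) := List.isChain_iff_pairwise.mp hs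
  have hlpos : 0 < l.length := List.length_pos_iff.mpr hlen
  have hIdx : l.length - 1 < l.length := by omega
  rw [List.getLast?_eq_getElem?, List.getElem?_eq_getElem hIdx] at hg
  have hgv : l[l.length - 1] = g := Option.some.inj hg
  have hmv : l[nv] = m := hget
  by_cases hc : nv = l.length - 1
  · subst hc; omega
  · have hlt : nv < l.length - 1 := by omega
    have := List.pairwise_iff_getElem.mp hp nv (l.length - 1) hn hIdx hlt
    omega

lemma inducing_take {H : SimpleGraph V} {k : ℕ} {φ : EdgeColoring H k} {r : V}
    {s : ℕ → V} {p a : ℕ} {l : List ℕ} (hl : IsInducingSeq φ r s p a l) {n : ℕ}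
    (hn : n < l.length) :
    IsInducingSeq φ r s p a (l.take (n+1)) ∧
      (l.take (n+1)).getLast? = some (l.get ⟨n, hn⟩) ∧ (l.take (n+1)) ≠ [] := by
  have hpre : (l.take (n+1)) <+: l := List.take_prefix _ _
  have hlen : (l.take (n+1)).length = n + 1 := by rw [List.length_take]; omega
  have hne : l.take (n+1) ≠ [] := by
    intro h; rw [h] at hlen; simp at hlen
  have hlne : l ≠ [] := List.ne_nil_of_length_pos (by omega)
  refine ⟨⟨fun x hx => hl.1 x (hpre.subset hx), hl.2.1.prefix hpre, ?_,
    hl.2.2.2.prefix hpre⟩, ?_, hne⟩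
  · intro h
    have hh : (l.take (n+1)).head h = l.head hlne := by
      rw [List.head_eq_getElem, List.head_eq_getElem]
      exact List.getElem_take
    rw [hh]; exact hl.2.2.1 hlne
  · rw [List.getLast?_eq_getElem?, hlen]
    have h1 : n + 1 - 1 = n := by omega
    rw [h1, List.getElem?_eq_getElem (by omega)]
    congr 1
    exact List.getElem_take

end Lists
section Convert

variable [Fintype V] [DecidableEq V]
variable {G : SimpleGraph V} [DecidableRel G.Adj] {r : V}

lemma fan_of_anchored {sf : ℕ → V}
    (φ' : EdgeColoring (G.deleteEdges {s(r, sf 1)}) G.maxDegree) {p : ℕ}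
    (hsp : ∀ i ∈ Set.Icc 1 p, G.Adj r (sf i) ∧ sf i ≠ r)
    (hinj : Set.InjOn sf (Set.Icc 1 p))
    (T : Finset ℕ) (hT1 : 1 ∈ T) (hTmem : ∀ x ∈ T, x ∈ Set.Icc 1 p)
    (hanch : ∀ x ∈ T, x ≠ 1 → ∃ y ∈ T, y < x ∧ φ'.color s(r, sf x) ∈ φ'.missing (sf y)) :
    IsMultifanAt φ' G r (fun n => sf ((T.sort (· ≤ ·)).getD (n-1) 1))
      (T.sort (· ≤ ·)).length ∧
    sf ((T.sort (· ≤ ·)).getD 0 1) = sf 1 ∧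
    ∀ x ∈ T, ∃ n ∈ Set.Icc 1 (T.sort (· ≤ ·)).length, (T.sort (· ≤ ·)).getD (n-1) 1 = x := by
  set L := T.sort (· ≤ ·) with hLdef
  have hsort : L.Pairwise (· < ·) := List.sortedLT_iff_pairwise.mp T.sortedLT_sort
  have hmemL : ∀ x, x ∈ L ↔ x ∈ T := fun x => Finset.mem_sort _
  have h1L : (1:ℕ) ∈ L := (hmemL 1).mpr hT1
  have hlpos : 0 < L.length := List.length_pos_iff.mpr (List.ne_nil_of_mem h1L)
  have hgetD : ∀ (idx : ℕ) (h : idx < L.length), L.getD idx 1 = L.get ⟨idx, h⟩ := by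
    intro idx h
    rw [List.getD_eq_getElem L 1 h]
    rfl
  have hgetmem : ∀ (kk : ℕ) (h : kk < L.length), L.get ⟨kk, h⟩ ∈ Set.Icc 1 p :=
    fun kk h => hTmem _ ((hmemL _).mp (List.get_mem L ⟨kk, h⟩))
  have hmono : ∀ (k1 k2 : ℕ) (h1 : k1 < L.length) (h2 : k2 < L.length), k1 < k2 →
      L.get ⟨k1, h1⟩ < L.get ⟨k2, h2⟩ := by
    intro k1 k2 h1 h2 hlt
    exact List.pairwise_iff_getElem.mp hsort k1 k2 h1 h2 hlt
  have hL0 : L.get ⟨0, hlpos⟩ = 1 := by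
    obtain ⟨⟨nv, hn⟩, hget⟩ := List.mem_iff_get.mp h1L
    rcases Nat.eq_zero_or_pos nv with h0 | h0
    · subst h0; exact hget
    · have hlt := hmono 0 nv hlpos hn h0
      have h1le := (hgetmem 0 hlpos).1
      omega
  refine ⟨⟨hlpos, ?_, ?_, ?_⟩, ?_, ?_⟩
  · intro n hnI
    have hn1 : 1 ≤ n := hnI.1
    have hn2 : n ≤ L.length := hnI.2
    have hlt : n - 1 < L.length := by omega
    dsimp only
    rw [hgetD (n-1) hlt]
    exact hsp _ (hgetmem (n-1) hlt)
  · intro n1 hn1 n2 hn2 heq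
    have h1a : 1 ≤ n1 := hn1.1
    have h1b : n1 ≤ L.length := hn1.2
    have h2a : 1 ≤ n2 := hn2.1
    have h2b : n2 ≤ L.length := hn2.2
    have h1' : n1 - 1 < L.length := by omega
    have h2' : n2 - 1 < L.length := by omega
    dsimp only at heq
    rw [hgetD (n1-1) h1', hgetD (n2-1) h2'] at heq
    have heq2 := hinj (hgetmem _ h1') (hgetmem _ h2') heq
    by_contra hne
    rcases lt_trichotomy (n1-1) (n2-1) with h | h | h
    · exact absurd heq2 (ne_of_lt (hmono _ _ _ _ h))
    · omega
    · exact absurd heq2.symm (ne_of_lt (hmono _ _ _ _ h))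
  · intro n hnI
    have hn2 : 2 ≤ n := hnI.1
    have hnlen : n ≤ L.length := hnI.2
    have hlt : n - 1 < L.length := by omega
    have hxT : L.get ⟨n-1, hlt⟩ ∈ T := (hmemL _).mp (List.get_mem _ _)
    have hxne : L.get ⟨n-1, hlt⟩ ≠ 1 := by
      have := hmono 0 (n-1) hlpos hlt (by omega)
      rw [hL0] at this; omega
    obtain ⟨y, hyT, hylt, hcond⟩ := hanch _ hxT hxne
    obtain ⟨⟨kv, hk⟩, hkget⟩ := List.mem_iff_get.mp ((hmemL y).mpr hyT)
    have hkn : kv < n - 1 := by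
      by_contra hge
      push_neg at hge
      rcases eq_or_lt_of_le hge with h | h
      · have : L.get ⟨kv, hk⟩ = L.get ⟨n-1, hlt⟩ := by
          congr 1
          exact (Fin.mk_eq_mk).mpr h.symm
        rw [this] at hkget
        omega
      · have := hmono (n-1) kv hlt hk h
        omega
    refine ⟨kv + 1, ⟨by omega, by omega⟩, ?_⟩
    show φ'.color s(r, sf (L.getD (n-1) 1)) ∈ φ'.missing (sf (L.getD (kv + 1 - 1) 1))
    have hred : kv + 1 - 1 = kv := rfl
    rw [hred, hgetD (n-1) hlt, hgetD kv hk, hkget]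
    exact hcond
  · rw [hgetD 0 hlpos, hL0]
  · intro x hxT
    obtain ⟨⟨kv, hk⟩, hkget⟩ := List.mem_iff_get.mp ((hmemL x).mpr hxT)
    refine ⟨kv + 1, ⟨by omega, by omega⟩, ?_⟩
    have hred : kv + 1 - 1 = kv := rfl
    rw [hred, hgetD kv hk]
    exact hkget

end Convert
theorem statement_8 [Fintype V] [DecidableEq V]
    (G : SimpleGraph V) [DecidableRel G.Adj] (hC : Class2 G)
    (r : V) (s : ℕ → V) (hadj : G.Adj r (s 1))
    (φ : EdgeColoring (G.deleteEdges {s(r, s 1)}) G.maxDegree)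
    (p : ℕ) (hF : IsMultifanAt φ G r s p)
    (i j : ℕ) (hi : i ∈ Set.Icc 1 p) (hj : j ∈ Set.Icc 1 p) (hij : i ≠ j)
    (δ lam : ℕ) (hδ : δ ∈ φ.missing (s i)) (hlam : lam ∈ φ.missing (s j))
    (a b : ℕ) (ha : a ∈ φ.missing (s 1)) (hb : b ∈ φ.missing (s 1)) (hab : a ≠ b)
    (hδa : InducedBy φ r s p a δ) (hlamb : InducedBy φ r s p b lam) :
    (chainGraph φ δ lam).Reachable (s i) (s j) := by
  by_contra hne
  have h1p : (1:ℕ) ∈ Set.Icc 1 p := ⟨le_refl 1, hF.1⟩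
  have Afan : ∀ {u v' γ' : ℕ}, u ∈ Set.Icc 1 p → v' ∈ Set.Icc 1 p → u ≠ v' →
      γ' ∈ φ.missing (s u) → γ' ∈ φ.missing (s v') → False :=
    fun hu hv huv h1' h2' => lemA' hC hadj φ s p hF rfl hu hv huv h1' h2'
  have hdlne : δ ≠ lam := fun he => Afan hi hj hij hδ (he ▸ hlam)
  -- extract the inducing sequence for δ (ending at i)
  have hLa : ∃ L, IsInducingSeq φ r s p a L ∧
      ((L = [] ∧ i = 1 ∧ δ = a) ∨ (L.getLast? = some i ∧ L ≠ [] ∧ 2 ≤ i)) := by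
    rcases hδa with he | ⟨l, hl, m, hm, hmem⟩
    · refine ⟨[], ⟨fun x hx => absurd hx List.not_mem_nil, List.isChain_nil,
        fun h => absurd rfl h, List.isChain_nil⟩, Or.inl ⟨rfl, ?_, he⟩⟩
      by_contra hne1
      refine Afan h1p hi (fun h => hne1 h.symm) ?_ hδ
      rw [he]; exact ha
    · have hmIcc : m ∈ Set.Icc 2 p := hl.1 m hm
      have hm2 := hmIcc.1
      have hmp := hmIcc.2
      have hmi : m = i := by
        by_contra hne'
        exact Afan ⟨by omega, hmp⟩ hi hne' hmem hδ
      subst hmi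
      obtain ⟨⟨nv, hn⟩, hget⟩ := List.mem_iff_get.mp hm
      obtain ⟨hind, hlast, hne''⟩ := inducing_take hl hn
      exact ⟨l.take (nv+1), hind, Or.inr ⟨by rw [hlast, hget], hne'', by omega⟩⟩
  -- extract the inducing sequence for lam (ending at j)
  have hLb : ∃ L, IsInducingSeq φ r s p b L ∧
      ((L = [] ∧ j = 1 ∧ lam = b) ∨ (L.getLast? = some j ∧ L ≠ [] ∧ 2 ≤ j)) := by
    rcases hlamb with he | ⟨l, hl, m, hm, hmem⟩
    · refine ⟨[], ⟨fun x hx => absurd hx List.not_mem_nil, List.isChain_nil,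
        fun h => absurd rfl h, List.isChain_nil⟩, Or.inl ⟨rfl, ?_, he⟩⟩
      by_contra hne1
      refine Afan h1p hj (fun h => hne1 h.symm) ?_ hlam
      rw [he]; exact hb
    · have hmIcc : m ∈ Set.Icc 2 p := hl.1 m hm
      have hm2 := hmIcc.1
      have hmp := hmIcc.2
      have hmi : m = j := by
        by_contra hne'
        exact Afan ⟨by omega, hmp⟩ hj hne' hmem hlam
      subst hmi
      obtain ⟨⟨nv, hn⟩, hget⟩ := List.mem_iff_get.mp hm
      obtain ⟨hind, hlast, hne''⟩ := inducing_take hl hn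
      exact ⟨l.take (nv+1), hind, Or.inr ⟨by rw [hlast, hget], hne'', by omega⟩⟩
  obtain ⟨La, hLaInd, hLaspec⟩ := hLa
  obtain ⟨Lb, hLbInd, hLbspec⟩ := hLb
  -- the two inducing sequences are disjoint
  have hU : ∀ m, m ∈ La → m ∈ Lb → False := by
    intro m
    induction m using Nat.strong_induction_on with
    | _ m IH =>
    intro hma hmb
    rcases inducing_mem_cases hLaInd hma with hha | ⟨y1, hy1, hy1lt, hc1⟩ <;>
      rcases inducing_mem_cases hLbInd hmb with hhb | ⟨y2, hy2, hy2lt, hc2⟩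
    · exact hab (hha.symm.trans hhb)
    · have hy2I : y2 ∈ Set.Icc 2 p := hLbInd.1 y2 hy2
      have h2a := hy2I.1
      have h2b := hy2I.2
      refine Afan h1p ⟨by omega, h2b⟩ (by omega) ha ?_
      rw [← hha]; exact hc2
    · have hy1I : y1 ∈ Set.Icc 2 p := hLaInd.1 y1 hy1
      have h2a := hy1I.1
      have h2b := hy1I.2
      refine Afan h1p ⟨by omega, h2b⟩ (by omega) hb ?_
      rw [← hhb]; exact hc1
    · have hy1I : y1 ∈ Set.Icc 2 p := hLaInd.1 y1 hy1
      have hy2I : y2 ∈ Set.Icc 2 p := hLbInd.1 y2 hy2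
      have h1a := hy1I.1
      have h1b := hy1I.2
      have h2a := hy2I.1
      have h2b := hy2I.2
      have hy12 : y1 = y2 := by
        by_contra hne'
        exact Afan ⟨by omega, h1b⟩ ⟨by omega, h2b⟩ hne' hc1 hc2
      subst hy12
      exact IH y1 (by omega) hy1 hy2
  -- the Kempe swap at s j
  have hδIcc : δ ∈ Set.Icc 1 G.maxDegree := hδ.1
  have hlIcc : lam ∈ Set.Icc 1 G.maxDegree := hlam.1
  have hnrji : ¬ (chainGraph φ δ lam).Reachable (s j) (s i) := fun h => hne h.symm
  set φ' := kempeSwap φ δ lam (s j) hδIcc hlIcc with hφ'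
  have hδ'j : δ ∈ φ'.missing (s j) :=
    kempeSwap_missing_flip' φ δ lam (s j) hδIcc hlIcc (SimpleGraph.Reachable.refl _)
      hlam hdlne
  have hδ'i : δ ∈ φ'.missing (s i) := by
    rw [hφ', kempeSwap_missing_not_reach φ δ lam (s j) hδIcc hlIcc hnrji]
    exact hδ
  -- the merged fan index set
  set T : Finset ℕ := insert 1 (La.toFinset ∪ Lb.toFinset) with hT
  have hT1 : 1 ∈ T := Finset.mem_insert_self _ _
  have hTmem : ∀ x ∈ T, x ∈ Set.Icc 1 p := by
    intro x hx
    rcases Finset.mem_insert.mp hx with h | h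
    · subst h; exact h1p
    · rcases Finset.mem_union.mp h with h' | h'
      · have h2 := hLaInd.1 x (List.mem_toFinset.mp h')
        have h2a := h2.1
        exact ⟨by omega, h2.2⟩
      · have h2 := hLbInd.1 x (List.mem_toFinset.mp h')
        have h2a := h2.1
        exact ⟨by omega, h2.2⟩
  have hanch : ∀ x ∈ T, x ≠ 1 → ∃ y ∈ T, y < x ∧ φ'.color s(r, s x) ∈ φ'.missing (s y) := by
    intro x hxT hxne
    have hxab : x ∈ La ∨ x ∈ Lb := by
      rcases Finset.mem_insert.mp hxT with h | h
      · exact absurd h hxne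
      · rcases Finset.mem_union.mp h with h' | h'
        · exact Or.inl (List.mem_toFinset.mp h')
        · exact Or.inr (List.mem_toFinset.mp h')
    have transfer : ∀ y : ℕ, φ.color s(r, s x) ≠ δ → φ.color s(r, s x) ≠ lam →
        φ.color s(r, s x) ∈ φ.missing (s y) → φ'.color s(r, s x) ∈ φ'.missing (s y) := by
      intro y hd hl hmem
      rw [hφ', kempeSwap_color_of_ne φ δ lam (s j) hδIcc hlIcc hd hl,
        kempeSwap_missing_iff φ δ lam (s j) hδIcc hlIcc hd hl]
      exact hmem
    rcases hxab with hxa | hxb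
    · have hxI : x ∈ Set.Icc 2 p := hLaInd.1 x hxa
      have hx2 := hxI.1
      have hLane : La ≠ [] := List.ne_nil_of_mem hxa
      have hLaspec' : La.getLast? = some i ∧ 2 ≤ i := by
        rcases hLaspec with ⟨h0, -⟩ | ⟨h1', -, h2'⟩
        · exact absurd h0 hLane
        · exact ⟨h1', h2'⟩
      obtain ⟨hlastA, hi2⟩ := hLaspec'
      rcases inducing_mem_cases hLaInd hxa with hha | ⟨y1, hy1, hy1lt, hc1⟩
      · have hcd : φ.color s(r, s x) ≠ δ := by
          intro hcδ
          have hδa' : δ = a := hcδ.symm.trans hha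
          refine Afan h1p hi (by omega : (1:ℕ) ≠ i) ?_ hδ
          rw [hδa']; exact ha
        have hcl : φ.color s(r, s x) ≠ lam := by
          intro hcl2
          have hla2 : lam = a := hcl2.symm.trans hha
          rcases hLbspec with ⟨-, -, hlb3⟩ | ⟨-, -, hj2⟩
          · exact hab (hla2.symm.trans hlb3)
          · refine Afan h1p hj (by omega : (1:ℕ) ≠ j) ?_ hlam
            rw [hla2]; exact ha
        refine ⟨1, hT1, by omega, transfer 1 hcd hcl ?_⟩
        rw [hha]; exact ha
      · have hy1I : y1 ∈ Set.Icc 2 p := hLaInd.1 y1 hy1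
        have h1a := hy1I.1
        have h1b := hy1I.2
        have hcd : φ.color s(r, s x) ≠ δ := by
          intro hcδ
          have hδy1 : δ ∈ φ.missing (s y1) := by rw [← hcδ]; exact hc1
          have hy1i : y1 = i := by
            by_contra hne'
            exact Afan ⟨by omega, h1b⟩ hi hne' hδy1 hδ
          have hle := chain_lt_le_getLast hLaInd.2.1 hxa hlastA
          omega
        have hcl : φ.color s(r, s x) ≠ lam := by
          intro hcl2
          have hly1 : lam ∈ φ.missing (s y1) := by rw [← hcl2]; exact hc1
          have hy1j : y1 = j := by
            by_contra hne'
            exact Afan ⟨by omega, h1b⟩ hj hne' hly1 hlam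
          rcases hLbspec with ⟨-, hj1, -⟩ | ⟨hlastB, -, -⟩
          · omega
          · exact hU y1 hy1 (by rw [hy1j]; exact mem_of_getLast?' hlastB)
        refine ⟨y1, ?_, hy1lt, transfer y1 hcd hcl hc1⟩
        exact Finset.mem_insert.mpr (Or.inr (Finset.mem_union.mpr
          (Or.inl (List.mem_toFinset.mpr hy1))))
    · have hxI : x ∈ Set.Icc 2 p := hLbInd.1 x hxb
      have hx2 := hxI.1
      have hLbne : Lb ≠ [] := List.ne_nil_of_mem hxb
      have hLbspec' : Lb.getLast? = some j ∧ 2 ≤ j := by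
        rcases hLbspec with ⟨h0, -⟩ | ⟨h1', -, h2'⟩
        · exact absurd h0 hLbne
        · exact ⟨h1', h2'⟩
      obtain ⟨hlastB, hj2⟩ := hLbspec'
      rcases inducing_mem_cases hLbInd hxb with hhb | ⟨y2, hy2, hy2lt, hc2⟩
      · have hcl : φ.color s(r, s x) ≠ lam := by
          intro hcl2
          have hlb2 : lam = b := hcl2.symm.trans hhb
          refine Afan h1p hj (by omega : (1:ℕ) ≠ j) ?_ hlam
          rw [hlb2]; exact hb
        have hcd : φ.color s(r, s x) ≠ δ := by
          intro hcδ
          have hδb : δ = b := hcδ.symm.trans hhb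
          rcases hLaspec with ⟨-, -, hδa'⟩ | ⟨-, -, hi2⟩
          · exact hab (hδa'.symm.trans hδb)
          · refine Afan h1p hi (by omega : (1:ℕ) ≠ i) ?_ hδ
            rw [hδb]; exact hb
        refine ⟨1, hT1, by omega, transfer 1 hcd hcl ?_⟩
        rw [hhb]; exact hb
      · have hy2I : y2 ∈ Set.Icc 2 p := hLbInd.1 y2 hy2
        have h2a := hy2I.1
        have h2b := hy2I.2
        have hcl : φ.color s(r, s x) ≠ lam := by
          intro hcl2
          have hly2 : lam ∈ φ.missing (s y2) := by rw [← hcl2]; exact hc2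
          have hy2j : y2 = j := by
            by_contra hne'
            exact Afan ⟨by omega, h2b⟩ hj hne' hly2 hlam
          have hle := chain_lt_le_getLast hLbInd.2.1 hxb hlastB
          omega
        have hcd : φ.color s(r, s x) ≠ δ := by
          intro hcδ
          have hδy2 : δ ∈ φ.missing (s y2) := by rw [← hcδ]; exact hc2
          have hy2i : y2 = i := by
            by_contra hne'
            exact Afan ⟨by omega, h2b⟩ hi hne' hδy2 hδ
          rcases hLaspec with ⟨-, hi1, -⟩ | ⟨hlastA, -, -⟩
          · omega
          · exact hU y2 (by rw [hy2i]; exact mem_of_getLast?' hlastA) hy2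
        refine ⟨y2, ?_, hy2lt, transfer y2 hcd hcl hc2⟩
        exact Finset.mem_insert.mpr (Or.inr (Finset.mem_union.mpr
          (Or.inr (List.mem_toFinset.mpr hy2))))
  obtain ⟨hfan'', h1'', hpos⟩ := fan_of_anchored φ' hF.2.1 hF.2.2.1 T hT1 hTmem hanch
  have hiT : i ∈ T := by
    rcases hLaspec with ⟨-, h1i, -⟩ | ⟨hlastA, -, -⟩
    · rw [h1i]; exact hT1
    · exact Finset.mem_insert.mpr (Or.inr (Finset.mem_union.mpr
        (Or.inl (List.mem_toFinset.mpr (mem_of_getLast?' hlastA)))))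
  have hjT : j ∈ T := by
    rcases hLbspec with ⟨-, h1j, -⟩ | ⟨hlastB, -, -⟩
    · rw [h1j]; exact hT1
    · exact Finset.mem_insert.mpr (Or.inr (Finset.mem_union.mpr
        (Or.inr (List.mem_toFinset.mpr (mem_of_getLast?' hlastB)))))
  obtain ⟨ni, hniI, hnii⟩ := hpos i hiT
  obtain ⟨nj, hnjI, hnjj⟩ := hpos j hjT
  have hninj : ni ≠ nj := by
    intro h
    subst h
    rw [hnii] at hnjj
    exact hij hnjj
  refine lemA' hC hadj φ' _ _ hfan'' h1'' (γ := δ) hniI hnjI hninj ?_ ?_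
  · show δ ∈ φ'.missing (s ((T.sort (· ≤ ·)).getD (ni - 1) 1))
    rw [hnii]
    exact hδ'i
  · show δ ∈ φ'.missing (s ((T.sort (· ≤ ·)).getD (nj - 1) 1))
    rw [hnjj]
    exact hδ'j
end

section
/- Let (G,rs₁,φ) be a coloring-triple, F=F_φ(r,s₁:s_α:s_β) a typical multifan, and L=(F,ru,u,ux,x) a lollipop centered at r with φ(ru)=α+1 and φ̄(x)={α+1}. Then φ(ux)≠1, and the edge ux lies on the (1,φ(ux))-chain of G−rs₁ containing r (i.e. ux∈P_r(1,φ(ux),φ)). -/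
open SimpleGraph

variable {V : Type*}

lemma sym2_ne_of {a b c d : V} (h : ¬(a = c ∧ b = d ∨ a = d ∧ b = c)) :
    s(a, b) ≠ s(c, d) := fun he => h (Sym2.eq_iff.mp he)

lemma sym2_ne_left {a w p q : V} (h1 : a ≠ p) (h2 : a ≠ q) : s(a, w) ≠ s(p, q) := by
  intro h
  rcases Sym2.eq_iff.mp h with ⟨h', -⟩ | ⟨h', -⟩
  exacts [h1 h', h2 h']

/-- Shifting the fan `r s₁, …, r sₘ` extends `ψ` to a `Δ`-coloring of `G`, contradiction. -/
lemma fanShift [Fintype V] [DecidableEq V] (G : SimpleGraph V) [DecidableRel G.Adj]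
    (hclass2 : IsEmpty (EdgeColoring G G.maxDegree))
    (r : V) (s : ℕ → V)
    (hadjs : ∀ n, 1 ≤ n → n ≤ G.maxDegree - 2 → G.Adj r (s n))
    (hinj : Set.InjOn s (Set.Icc 1 (G.maxDegree - 2)))
    (ψ : EdgeColoring (G.deleteEdges {s(r, s 1)}) G.maxDegree)
    (m δ : ℕ) (hm1 : 1 ≤ m) (hmΔ : m ≤ G.maxDegree - 2)
    (hδne : ∀ n, 2 ≤ n → n ≤ m → δ ≠ n)
    (hδr : δ ∈ ψ.missing r) (hδm : δ ∈ ψ.missing (s m))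
    (hcol : ∀ t, 2 ≤ t → t ≤ m → ψ.color s(r, s t) = t)
    (hmiss : ∀ t, 1 ≤ t → t < m → (t + 1) ∈ ψ.missing (s t)) : False := by
  classical
  have hsner : ∀ n, 1 ≤ n → n ≤ G.maxDegree - 2 → s n ≠ r :=
    fun n h1 h2 => (hadjs n h1 h2).ne'
  set fan : Sym2 V → Prop := fun e => ∃ n, 1 ≤ n ∧ n ≤ m ∧ e = s(r, s n) with hfandef
  set ν : ℕ → ℕ := fun n => if n = m then δ else n + 1 with hνdef
  set col : Sym2 V → ℕ := fun e => if h : fan e then ν h.choose else ψ.color e with hcoldef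
  have hfan_spec : ∀ t, 1 ≤ t → t ≤ m → col s(r, s t) = ν t := by
    intro t h1 h2
    have hf : fan s(r, s t) := ⟨t, h1, h2, rfl⟩
    obtain ⟨h1', h2', he⟩ := hf.choose_spec
    have hch : hf.choose = t := by
      rcases Sym2.eq_iff.mp he with ⟨-, h⟩ | ⟨h, -⟩
      · exact (hinj (Set.mem_Icc.mpr ⟨h1', h2'.trans hmΔ⟩)
          (Set.mem_Icc.mpr ⟨h1, h2.trans hmΔ⟩) h.symm)
      · exact absurd h.symm (hsner _ h1' (h2'.trans hmΔ))
    simp only [hcoldef, dif_pos hf, hch]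
  have hnotfan_ne1 : ∀ e, ¬ fan e → e ≠ s(r, s 1) :=
    fun e hne he => hne ⟨1, le_refl 1, hm1, he⟩
  have hHadj : ∀ a b, G.Adj a b → s(a, b) ≠ s(r, s 1) →
      (G.deleteEdges {s(r, s 1)}).Adj a b := by
    intro a b h hne
    rw [deleteEdges_adj]
    exact ⟨h, by simpa using hne⟩
  have hHrs : ∀ n, 2 ≤ n → n ≤ G.maxDegree - 2 → (G.deleteEdges {s(r, s 1)}).Adj r (s n) := by
    intro n h2 hn
    refine hHadj _ _ (hadjs n (by omega) hn) (sym2_ne_of ?_)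
    rintro (⟨-, h⟩ | ⟨-, h⟩)
    · have := hinj (Set.mem_Icc.mpr ⟨by omega, hn⟩)
        (Set.mem_Icc.mpr ⟨le_refl 1, hm1.trans hmΔ⟩) h
      omega
    · exact hsner n (by omega) hn h
  have hcolnotfan : ∀ e, ¬ fan e → col e = ψ.color e := fun e h => dif_neg h
  refine hclass2.false ⟨col, ?_, ?_⟩
  · intro e he
    by_cases hf : fan e
    · obtain ⟨h1, h2, -⟩ := hf.choose_spec
      simp only [hcoldef, dif_pos hf, hνdef]
      split_ifs with hm
      · exact hδr.1
      · exact Set.mem_Icc.mpr ⟨by omega, by omega⟩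
    · rw [hcolnotfan e hf]
      refine ψ.mem_Icc e ?_
      rw [edgeSet_deleteEdges]
      exact ⟨he, by simpa using hnotfan_ne1 e hf⟩
  · intro a b w hab haw hbw
    have key : ∀ b w : V, G.Adj a b → G.Adj a w → b ≠ w → fan s(a, b) → ¬ fan s(a, w) →
        col s(a, b) ≠ col s(a, w) := by
      intro b w hab haw hbw hf1 hf2
      have hc2 : col s(a, w) = ψ.color s(a, w) := hcolnotfan _ hf2
      have hHaw : (G.deleteEdges {s(r, s 1)}).Adj a w := hHadj a w haw (hnotfan_ne1 _ hf2)
      obtain ⟨n, hn1, hnm, he⟩ := hf1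
      rcases Sym2.eq_iff.mp he with ⟨har, hbn⟩ | ⟨har, hbn⟩
      · rw [he, hfan_spec n hn1 hnm, hc2, har]
        rw [har] at hHaw
        simp only [hνdef]
        split_ifs with hm
        · exact (hδr.2 w hHaw).symm
        · have hws : w ≠ s (n + 1) := fun hEq => hf2 ⟨n + 1, by omega, by omega, by rw [hEq, har]⟩
          have hH2 : (G.deleteEdges {s(r, s 1)}).Adj r (s (n + 1)) :=
            hHrs (n + 1) (by omega) (by omega)
          have hpr := ψ.proper r w (s (n + 1)) hHaw hH2 hws
          rw [hcol (n + 1) (by omega) (by omega)] at hpr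
          exact fun hEq => hpr hEq.symm
      · have hνmiss : ν n ∈ ψ.missing (s n) := by
          simp only [hνdef]
          split_ifs with hm
          · exact hm ▸ hδm
          · exact hmiss n hn1 (by omega)
        have hv1 : col s(a, b) = ν n := by rw [he]; exact hfan_spec n hn1 hnm
        rw [hv1, hc2, har]
        rw [har] at hHaw
        exact fun hEq => (hνmiss.2 w hHaw) hEq.symm
    by_cases hf1 : fan s(a, b) <;> by_cases hf2 : fan s(a, w)
    · obtain ⟨n₁, h11, h1m, he1⟩ := hf1
      obtain ⟨n₂, h21, h2m, he2⟩ := hf2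
      rcases Sym2.eq_iff.mp he1 with ⟨har1, hb1⟩ | ⟨har1, hb1⟩ <;>
        rcases Sym2.eq_iff.mp he2 with ⟨har2, hb2⟩ | ⟨har2, hb2⟩
      · -- a = r, b = s n₁, w = s n₂
        have hn12 : n₁ ≠ n₂ := by rintro rfl; exact hbw (hb1.trans hb2.symm)
        rw [show s(a, b) = s(r, s n₁) from he1, show s(a, w) = s(r, s n₂) from he2,
          hfan_spec n₁ h11 h1m, hfan_spec n₂ h21 h2m]
        simp only [hνdef]
        split_ifs with hA hB hB
        · omega
        · exact hδne (n₂ + 1) (by omega) (by omega)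
        · exact fun h => hδne (n₁ + 1) (by omega) (by omega) h.symm
        · omega
      · exact absurd (har1.symm.trans har2) (hsner n₂ h21 (h2m.trans hmΔ)).symm
      · exact absurd (har2.symm.trans har1) (hsner n₁ h11 (h1m.trans hmΔ)).symm
      · -- a = s n₁ = s n₂, b = r = w : contradiction
        exact absurd (hb1.trans hb2.symm) hbw
    · exact key b w hab haw hbw hf1 hf2
    · exact (key w b haw hab hbw.symm hf2 hf1).symm
    · rw [hcolnotfan _ hf1, hcolnotfan _ hf2]
      exact ψ.proper a b w (hHadj a b hab (hnotfan_ne1 _ hf1)) (hHadj a w haw (hnotfan_ne1 _ hf2)) hbw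

/-- Swapping the colors of `ru` (color `α+1`) and `ux` (color `1`). -/
lemma ruux [DecidableEq V] {H : SimpleGraph V} {k : ℕ} (ψ : EdgeColoring H k) (r u x : V) (α : ℕ)
    (hα1 : 1 ≤ α) (hαk : α + 1 ≤ k)
    (hru : H.Adj r u) (hux : H.Adj u x) (hrx : r ≠ x)
    (hcru : ψ.color s(r, u) = α + 1) (hcux : ψ.color s(u, x) = 1)
    (h1r : ∀ w, H.Adj r w → ψ.color s(r, w) ≠ 1)
    (hax : ∀ w, H.Adj x w → ψ.color s(x, w) ≠ α + 1) :
    ∃ ψ' : EdgeColoring H k,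
      ∀ e, ψ'.color e =
        if e = s(u, x) then α + 1 else if e = s(r, u) then 1 else ψ.color e := by
  classical
  have hrune : r ≠ u := hru.ne
  have huxne : u ≠ x := hux.ne
  set col : Sym2 V → ℕ :=
    fun e => if e = s(u, x) then α + 1 else if e = s(r, u) then 1 else ψ.color e with hcoldef
  refine ⟨⟨col, ?_, ?_⟩, fun e => rfl⟩
  · intro e he
    simp only [hcoldef]
    split_ifs with h1 h2
    · exact Set.mem_Icc.mpr ⟨by omega, hαk⟩
    · exact Set.mem_Icc.mpr ⟨le_refl 1, by omega⟩
    · exact ψ.mem_Icc e he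
  · intro a b w hab haw hbw
    have main : ∀ b w : V, H.Adj a b → H.Adj a w → b ≠ w →
        s(a, w) ≠ s(u, x) → s(a, w) ≠ s(r, u) → col s(a, b) ≠ col s(a, w) := by
      intro b w hab haw hbw h2x h2u
      have hc2 : col s(a, w) = ψ.color s(a, w) := by
        simp only [hcoldef, if_neg h2x, if_neg h2u]
      by_cases h1x : s(a, b) = s(u, x)
      · have hv1 : col s(a, b) = α + 1 := by simp only [hcoldef, if_pos h1x]
        rw [hv1, hc2]
        rcases Sym2.eq_iff.mp h1x with ⟨hau, -⟩ | ⟨hax', -⟩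
        · -- a = u
          have hwr : w ≠ r := by
            intro hwr
            exact h2u (by rw [hau, hwr, Sym2.eq_swap])
          have hpr := ψ.proper a w r haw (hau ▸ hru.symm) hwr
          rw [hau] at hpr ⊢
          rw [show s(u, r) = s(r, u) from Sym2.eq_swap, hcru] at hpr
          exact fun h => hpr h.symm
        · rw [hax']
          exact fun h => hax w (hax' ▸ haw) h.symm
      · by_cases h1u : s(a, b) = s(r, u)
        · have hv1 : col s(a, b) = 1 := by simp only [hcoldef, if_neg h1x, if_pos h1u]
          rw [hv1, hc2]
          rcases Sym2.eq_iff.mp h1u with ⟨har, -⟩ | ⟨hau, -⟩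
          · rw [har]
            exact fun h => h1r w (har ▸ haw) h.symm
          · have hwx : w ≠ x := by
              intro hwx
              exact h2x (by rw [hau, hwx])
            have hpr := ψ.proper a w x haw (hau ▸ hux) hwx
            rw [hau] at hpr ⊢
            rw [hcux] at hpr
            exact fun h => hpr h.symm
        · have hv1 : col s(a, b) = ψ.color s(a, b) := by
            simp only [hcoldef, if_neg h1x, if_neg h1u]
          rw [hv1, hc2]
          exact ψ.proper a b w hab haw hbw
    by_cases h2x : s(a, w) = s(u, x)
    · by_cases h1u : s(a, b) = s(r, u)
      · have hv1 : col s(a, b) = 1 := by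
          have : s(a, b) ≠ s(u, x) := by
            intro h
            exact hbw ((Sym2.congr_right).mp (h.trans h2x.symm))
          simp only [hcoldef, if_neg this, if_pos h1u]
        have hv2 : col s(a, w) = α + 1 := by simp only [hcoldef, if_pos h2x]
        rw [hv1, hv2]; omega
      · have h1x : s(a, b) ≠ s(u, x) := by
          intro h
          exact hbw ((Sym2.congr_right).mp (h.trans h2x.symm))
        exact (main w b haw hab hbw.symm h1x h1u).symm
    · by_cases h2u : s(a, w) = s(r, u)
      · by_cases h1x : s(a, b) = s(u, x)
        · have hv1 : col s(a, b) = α + 1 := by simp only [hcoldef, if_pos h1x]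
          have hv2 : col s(a, w) = 1 := by
            have : s(a, w) ≠ s(u, x) := h2x
            simp only [hcoldef, if_neg this, if_pos h2u]
          rw [hv1, hv2]; omega
        · have h1u : s(a, b) ≠ s(r, u) := by
            intro h
            exact hbw ((Sym2.congr_right).mp (h.trans h2u.symm))
          exact (main w b haw hab hbw.symm h1x h1u).symm
      · exact main b w hab haw hbw h2x h2u


theorem statement_10 [Fintype V] [DecidableEq V]
    (G : SimpleGraph V) [DecidableRel G.Adj]
    (hHZ : IsHZ G) (hDelta : 3 ≤ G.maxDegree)
    (r : V) (s : ℕ → V)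
    (hr : G.degree r = G.maxDegree) (hlab : NbrLabeling G r s)
    (φ : EdgeColoring (G.deleteEdges {s(r, s 1)}) G.maxDegree)
    (α β : ℕ) (hF : IsTypicalMultifan G r s α β φ)
    (u x : V) (hL : IsLollipop G r s β u x)
    (hru : φ.color s(r, u) = α + 1)
    (hx : φ.missing x = {α + 1}) :
    φ.color s(u, x) ≠ 1 ∧
    (chainGraph φ 1 (φ.color s(u, x))).Adj u x ∧
    (chainGraph φ 1 (φ.color s(u, x))).Reachable r u := by
  classical
  obtain ⟨-, hclass2, -⟩ := hHZ
  obtain ⟨hα1, hαβ, hβΔ, -, -, hmr, hms1, hmsi, -⟩ := hF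
  obtain ⟨hinj, hlab2, -⟩ := hlab
  obtain ⟨hadjru, hdu, hadjux, hdx, hxr, hxs⟩ := hL
  have hΔ : 3 ≤ G.maxDegree := hDelta
  have hadjs : ∀ n, 1 ≤ n → n ≤ G.maxDegree - 2 → G.Adj r (s n) :=
    fun n h1 h2 => (hlab2 n (Set.mem_Icc.mpr ⟨h1, h2⟩)).1
  have hune : ∀ n, 1 ≤ n → n ≤ G.maxDegree - 2 → u ≠ s n := by
    intro n h1 h2 h
    have hd := (hlab2 n (Set.mem_Icc.mpr ⟨h1, h2⟩)).2
    rw [← h, hdu] at hd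
    omega
  have hrne : ∀ n, 1 ≤ n → n ≤ G.maxDegree - 2 → r ≠ s n :=
    fun n h1 h2 => (hadjs n h1 h2).ne
  have hur : u ≠ r := hadjru.ne'
  have hxsn : ∀ n, 1 ≤ n → n ≤ α → x ≠ s n :=
    fun n h1 h2 => hxs n (Set.mem_Icc.mpr ⟨h1, by omega⟩)
  have hH : ∀ a b, G.Adj a b → s(a, b) ≠ s(r, s 1) → (G.deleteEdges {s(r, s 1)}).Adj a b := by
    intro a b h hne
    rw [deleteEdges_adj]
    exact ⟨h, by simpa using hne⟩
  have hΔ2 : 1 ≤ G.maxDegree - 2 := by omega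
  have hHru : (G.deleteEdges {s(r, s 1)}).Adj r u := by
    refine hH r u hadjru (sym2_ne_of ?_)
    rintro (⟨-, h⟩ | ⟨-, h⟩)
    · exact hune 1 le_rfl hΔ2 h
    · exact hur h
  have hHux : (G.deleteEdges {s(r, s 1)}).Adj u x := by
    refine hH u x hadjux (sym2_ne_of ?_)
    rintro (⟨h, -⟩ | ⟨h, -⟩)
    · exact hur h
    · exact hune 1 le_rfl hΔ2 h
  have hHrs : ∀ n, 2 ≤ n → n ≤ G.maxDegree - 2 → (G.deleteEdges {s(r, s 1)}).Adj r (s n) := by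
    intro n h2 hn
    refine hH r (s n) (hadjs n (by omega) hn) (sym2_ne_of ?_)
    rintro (⟨-, h⟩ | ⟨-, h⟩)
    · have := hinj (Set.mem_Icc.mpr ⟨by omega, hn⟩) (Set.mem_Icc.mpr ⟨le_rfl, hΔ2⟩) h
      omega
    · exact hrne n (by omega) hn h.symm
  have hmr1 : ∀ w, (G.deleteEdges {s(r, s 1)}).Adj r w → φ.color s(r, w) ≠ 1 := by
    have h1 : (1 : ℕ) ∈ φ.missing r := by rw [hmr]; exact rfl
    exact h1.2
  have hmx : ∀ w, (G.deleteEdges {s(r, s 1)}).Adj x w → φ.color s(x, w) ≠ α + 1 := by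
    have h1 : (α + 1 : ℕ) ∈ φ.missing x := by rw [hx]; exact rfl
    exact h1.2
  have hmissφ : ∀ t, 1 ≤ t → t ≤ α → (t + 1) ∈ φ.missing (s t) := by
    intro t h1 h2
    rcases eq_or_lt_of_le h1 with h | h
    · rw [← h, hms1]
      simp
    · have hmm := (hmsi t (Set.mem_Icc.mpr ⟨by omega, by omega⟩) (by omega)).2
      rw [hmm]
      exact rfl
  have hcolφ : ∀ t, 2 ≤ t → t ≤ α → φ.color s(r, s t) = t :=
    fun t h1 h2 => (hmsi t (Set.mem_Icc.mpr ⟨h1, by omega⟩) (by omega)).1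
  have hαΔ : α + 1 ≤ G.maxDegree := by omega
  have hcIcc : φ.color s(u, x) ∈ Set.Icc 1 G.maxDegree :=
    φ.mem_Icc _ ((SimpleGraph.mem_edgeSet _).mpr hHux)
  set c := φ.color s(u, x) with hcdef
  have hcIcc' : 1 ≤ c ∧ c ≤ G.maxDegree := Set.mem_Icc.mp hcIcc
  have hcne : c ≠ α + 1 := fun hc =>
    hmx u hHux.symm ((congrArg φ.color Sym2.eq_swap).trans (hcdef.symm.trans hc))
  -- Sym2 disequality helpers
  have hn_ux : ∀ t, 1 ≤ t → t ≤ α → s(r, s t) ≠ s(u, x) :=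
    fun t ht1 ht2 => sym2_ne_left hadjru.ne (Ne.symm hxr)
  have hn_ru : ∀ t, 1 ≤ t → t ≤ α → s(r, s t) ≠ s(r, u) := by
    intro t ht1 ht2 h
    exact hune t ht1 (by omega) (Sym2.congr_right.mp h).symm
  have hsn_ux : ∀ t w, 1 ≤ t → t ≤ α → s(s t, w) ≠ s(u, x) :=
    fun t w ht1 ht2 => sym2_ne_left (fun h => hune t ht1 (by omega) h.symm)
      (fun h => hxsn t ht1 ht2 h.symm)
  have hsn_ru : ∀ t w, 1 ≤ t → t ≤ α → s(s t, w) ≠ s(r, u) :=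
    fun t w ht1 ht2 => sym2_ne_left (fun h => hrne t ht1 (by omega) h.symm)
      (fun h => hune t ht1 (by omega) h.symm)
  -- Claim 1 : c ≠ 1
  have hc1 : c ≠ 1 := by
    intro h1
    obtain ⟨ψ', hψ'⟩ := ruux φ r u x α hα1 hαΔ hHru hHux (Ne.symm hxr) hru h1 hmr1 hmx
    have hmissψ' : ∀ t, 1 ≤ t → t ≤ α → (t + 1) ∈ ψ'.missing (s t) := by
      intro t h1' h2'
      refine ⟨Set.mem_Icc.mpr ⟨by omega, by omega⟩, ?_⟩
      intro w hw
      rw [hψ', if_neg (hsn_ux t w h1' h2'), if_neg (hsn_ru t w h1' h2')]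
      exact (hmissφ t h1' h2').2 w hw
    refine fanShift G hclass2 r s hadjs hinj ψ' α (α + 1) hα1 (by omega)
      (fun n hn1 hn2 => by omega) ?_ (hmissψ' α hα1 le_rfl) ?_
      (fun t ht1 ht2 => hmissψ' t ht1 (by omega))
    · refine ⟨Set.mem_Icc.mpr ⟨by omega, hαΔ⟩, ?_⟩
      intro w hw
      rw [hψ']
      by_cases hwu : w = u
      · rw [if_neg (sym2_ne_left hadjru.ne (Ne.symm hxr)), if_pos (by rw [hwu])]
        omega
      · rw [if_neg (sym2_ne_left hadjru.ne (Ne.symm hxr)),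
          if_neg (fun h => hwu (Sym2.congr_right.mp h))]
        have hp := φ.proper r w u hw hHru hwu
        rw [hru] at hp
        exact hp
    · intro t ht1 ht2
      rw [hψ', if_neg (hn_ux t (by omega) ht2), if_neg (hn_ru t (by omega) ht2)]
      exact hcolφ t ht1 ht2
  -- Claim 2
  have hchain_ux : (chainGraph φ 1 c).Adj u x := ⟨hHux, Or.inr hcdef.symm⟩
  refine ⟨hc1, hchain_ux, ?_⟩
  -- Claim 3
  by_contra hnr
  set inQ : V → Prop := fun v => (chainGraph φ 1 c).Reachable x v with hinQdef
  have hQx : inQ x := Reachable.refl x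
  have hQu : inQ u := (hchain_ux.symm).reachable
  have hnQr : ¬ inQ r := fun h => hnr (h.symm.trans hQu)
  set τ : ℕ → ℕ := fun n => if n = 1 then c else if n = c then 1 else n with hτdef
  have hτinj : Function.Injective τ := by
    intro a b h
    simp only [hτdef] at h
    split_ifs at h <;> omega
  set cols : Sym2 V → ℕ :=
    fun e => if ∃ v ∈ e, inQ v then τ (φ.color e) else φ.color e with hcolsdef
  have hedgecase : ∀ e, cols e = φ.color e ∨ cols e = τ (φ.color e) := by
    intro e
    simp only [hcolsdef]
    by_cases h : ∃ v ∈ e, inQ v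
    · exact Or.inr (if_pos h)
    · exact Or.inl (if_neg h)
  have hswap_at : ∀ v w, inQ v → cols s(v, w) = τ (φ.color s(v, w)) := by
    intro v w hv
    simp only [hcolsdef]
    exact if_pos ⟨v, Sym2.mem_mk_left v w, hv⟩
  have hswap_out : ∀ v w, ¬ inQ v → (G.deleteEdges {s(r, s 1)}).Adj v w →
      cols s(v, w) = φ.color s(v, w) := by
    intro v w hv hadj
    simp only [hcolsdef]
    split_ifs with h
    · obtain ⟨z, hz, hzQ⟩ := h
      rcases Sym2.mem_iff.mp hz with rfl | rfl
      · exact absurd hzQ hv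
      · have h1 : φ.color s(v, z) ≠ 1 := by
          intro hcc
          refine hv (hzQ.trans (SimpleGraph.Adj.reachable ?_))
          exact ⟨hadj.symm, Or.inl ((congrArg φ.color Sym2.eq_swap).trans hcc)⟩
        have h2 : φ.color s(v, z) ≠ c := by
          intro hcc
          refine hv (hzQ.trans (SimpleGraph.Adj.reachable ?_))
          exact ⟨hadj.symm, Or.inr ((congrArg φ.color Sym2.eq_swap).trans hcc)⟩
        simp only [hτdef]
        rw [if_neg h1, if_neg h2]
    · rfl
  have hpropers : ∀ a b w, (G.deleteEdges {s(r, s 1)}).Adj a b →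
      (G.deleteEdges {s(r, s 1)}).Adj a w → b ≠ w → cols s(a, b) ≠ cols s(a, w) := by
    intro a b w h1 h2 h3
    by_cases hQ : inQ a
    · rw [hswap_at a b hQ, hswap_at a w hQ]
      exact fun h => (φ.proper a b w h1 h2 h3) (hτinj h)
    · rw [hswap_out a b hQ h1, hswap_out a w hQ h2]
      exact φ.proper a b w h1 h2 h3
  have hmemIccs : ∀ e ∈ (G.deleteEdges {s(r, s 1)}).edgeSet,
      cols e ∈ Set.Icc 1 G.maxDegree := by
    intro e he
    have hIcc := Set.mem_Icc.mp (φ.mem_Icc e he)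
    rcases hedgecase e with h | h <;> rw [h]
    · exact Set.mem_Icc.mpr hIcc
    · simp only [hτdef]
      split_ifs
      · exact hcIcc
      · exact Set.mem_Icc.mpr ⟨le_rfl, by omega⟩
      · exact Set.mem_Icc.mpr hIcc
  set ψs : EdgeColoring (G.deleteEdges {s(r, s 1)}) G.maxDegree :=
    ⟨cols, hmemIccs, hpropers⟩ with hψsdef
  have hψscol : ∀ e, ψs.color e = cols e := fun _ => rfl
  have hsru : ψs.color s(r, u) = α + 1 := by
    rw [hψscol, hswap_out r u hnQr hHru, hru]
  have hsux : ψs.color s(u, x) = 1 := by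
    rw [hψscol, hswap_at u x hQu]
    simp only [hτdef]
    split_ifs with hA
    · exact absurd (hcdef.trans hA) hc1
    · rfl
  have hs1r : ∀ w, (G.deleteEdges {s(r, s 1)}).Adj r w → ψs.color s(r, w) ≠ 1 := by
    intro w hw
    rw [hψscol, hswap_out r w hnQr hw]
    exact hmr1 w hw
  have htr : ∀ γ, γ ≠ 1 → γ ≠ c → ∀ e, φ.color e ≠ γ → cols e ≠ γ := by
    intro γ hγ1 hγc e he
    rcases hedgecase e with h | h <;> rw [h]
    · exact he
    · simp only [hτdef]
      split_ifs
      · exact fun h' => hγc h'.symm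
      · exact fun h' => hγ1 h'.symm
      · exact he
  have hsax : ∀ w, (G.deleteEdges {s(r, s 1)}).Adj x w → ψs.color s(x, w) ≠ α + 1 := by
    intro w hw
    rw [hψscol]
    exact htr (α + 1) (by omega) (fun h => hcne h.symm) _ (hmx w hw)
  by_cases hbad : 2 ≤ c ∧ c ≤ α ∧ inQ (s (c - 1))
  · obtain ⟨hc2, hcα, hQs⟩ := hbad
    refine fanShift G hclass2 r s hadjs hinj ψs (c - 1) 1 (by omega) (by omega)
      (fun n h1 h2 => by omega) ⟨Set.mem_Icc.mpr ⟨le_rfl, by omega⟩, hs1r⟩ ?_ ?_ ?_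
    · refine ⟨Set.mem_Icc.mpr ⟨le_rfl, by omega⟩, ?_⟩
      intro w hw
      rw [hψscol, hswap_at _ _ hQs]
      have hφne : φ.color s(s (c - 1), w) ≠ c := by
        have hh := (hmissφ (c - 1) (by omega) (by omega)).2 w hw
        rwa [show c - 1 + 1 = c by omega] at hh
      simp only [hτdef]
      split_ifs with hA
      · exact hc1
      · exact hA
    · intro t h1 h2
      rw [hψscol, hswap_out r (s t) hnQr (hHrs t h1 (by omega))]
      exact hcolφ t h1 (by omega)
    · intro t h1 h2
      refine ⟨Set.mem_Icc.mpr ⟨by omega, by omega⟩, ?_⟩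
      intro w hw
      rw [hψscol]
      exact htr (t + 1) (by omega) (by omega) _ ((hmissφ t h1 (by omega)).2 w hw)
  · obtain ⟨ψ₂, hψ₂⟩ := ruux ψs r u x α hα1 hαΔ hHru hHux (Ne.symm hxr) hsru hsux hs1r hsax
    have hm2 : ∀ t, 1 ≤ t → t ≤ α → (t + 1) ∈ ψ₂.missing (s t) := by
      intro t h1 h2
      refine ⟨Set.mem_Icc.mpr ⟨by omega, by omega⟩, ?_⟩
      intro w hw
      rw [hψ₂, if_neg (hsn_ux t w h1 h2), if_neg (hsn_ru t w h1 h2), hψscol]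
      by_cases htc : t + 1 = c
      · have hnQst : ¬ inQ (s t) := by
          intro hQ
          exact hbad ⟨by omega, by omega, by rwa [show c - 1 = t by omega]⟩
        rw [hswap_out (s t) w hnQst hw]
        exact (hmissφ t h1 h2).2 w hw
      · exact htr (t + 1) (by omega) htc _ ((hmissφ t h1 h2).2 w hw)
    refine fanShift G hclass2 r s hadjs hinj ψ₂ α (α + 1) hα1 (by omega)
      (fun n h1 h2 => by omega) ?_ (hm2 α hα1 le_rfl) ?_ (fun t h1 h2 => hm2 t h1 (by omega))
    · refine ⟨Set.mem_Icc.mpr ⟨by omega, hαΔ⟩, ?_⟩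
      intro w hw
      rw [hψ₂]
      by_cases hwu : w = u
      · rw [if_neg (sym2_ne_left hadjru.ne (Ne.symm hxr)), if_pos (by rw [hwu])]
        omega
      · rw [if_neg (sym2_ne_left hadjru.ne (Ne.symm hxr)),
          if_neg (fun h => hwu (Sym2.congr_right.mp h)), hψscol, hswap_out r w hnQr hw]
        have hp := φ.proper r w u hw hHru hwu
        rw [hru] at hp
        exact hp
    · intro t h1 h2
      rw [hψ₂, if_neg (hn_ux t (by omega) h2), if_neg (hn_ru t (by omega) h2), hψscol,
        hswap_out r (s t) hnQr (hHrs t h1 (by omega))]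
      exact hcolφ t h1 h2
end
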